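/- arXiv:1511.00353 — 9 statements merged into one kernel-verified Lean document; each statement's English description precedes it below -/
import Mathlib

section
/- Let (E_t)_{t≥1} be i.i.d. nonnegative random variables, B̄ > 0, γ > 0, and μ = E[min{E_1, B̄}]. For any admissible online policy (g_t), where each g_t is a measurable function of (E_1,…,E_t), the n-horizon expected throughput satisfies (1/n)∑_{t=1}^n E[½·log₂(1 + γ·g_t)] ≤ ½·log₂(1 + (γ/n)·B̄ + γ·((n−1)/n)·μ) for every n ≥ 1. -/
open MeasureTheory ProbabilityTheory Filter Finset

/-!
Energy conservation gives, for every sample path, `∑_{t ≤ n} g_t ≤ B̄ + ∑_{2 ≤ t ≤ n} min(E_t, B̄)`: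
the battery starts full, and the energy that can be stored in slot `t` is at most
`min(E_t, B̄)`. Taking expectations bounds the average expected energy spent by
`(B̄ + (n - 1) μ) / n`. Since `x ↦ ½ log₂(1 + γ x)` is concave and nondecreasing on `[0, ∞)`,
Jensen's inequality (once for each expectation, once for the time average) bounds the average
throughput by its value at that point.
-/

lemma Real.concaveOn_log_one_add_mul {a : ℝ} (ha : 0 ≤ a) :
    ConcaveOn ℝ (Set.Ici 0) fun x => Real.log (1 + a * x) := by
  refine ⟨convex_Ici 0, fun x hx y hy p q hp hq hpq => ?_⟩
  have hx' : 1 + a * x ∈ Set.Ioi 0 := by simp only [Set.mem_Ioi]; nlinarith [Set.mem_Ici.1 hx]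
  have hy' : 1 + a * y ∈ Set.Ioi 0 := by simp only [Set.mem_Ioi]; nlinarith [Set.mem_Ici.1 hy]
  convert strictConcaveOn_log_Ioi.concaveOn.2 hx' hy' hp hq hpq using 2
  simp only [smul_eq_mul]
  linear_combination -hpq

noncomputable def shannonRate (γ x : ℝ) : ℝ := 1 / 2 * Real.logb 2 (1 + γ * x)

section ShannonRate

variable {γ : ℝ}

lemma measurable_shannonRate : Measurable (shannonRate γ) := by
  unfold shannonRate Real.logb
  fun_prop

lemma concaveOn_shannonRate (hγ : 0 ≤ γ) : ConcaveOn ℝ (Set.Ici 0) (shannonRate γ) := by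
  refine ((Real.concaveOn_log_one_add_mul hγ).smul
    (by positivity : (0 : ℝ) ≤ 1 / (2 * Real.log 2))).congr fun x _ => ?_
  simp only [shannonRate, Real.logb, smul_eq_mul]
  ring

lemma continuousOn_shannonRate (hγ : 0 ≤ γ) : ContinuousOn (shannonRate γ) (Set.Ici 0) :=
  continuousOn_const.mul <| (continuousOn_const.add (continuousOn_const.mul continuousOn_id)).logb
    fun _ hx => (add_pos_of_pos_of_nonneg one_pos (mul_nonneg hγ hx)).ne'

lemma monotoneOn_shannonRate (hγ : 0 ≤ γ) : MonotoneOn (shannonRate γ) (Set.Ici 0) :=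
  fun x hx _ _ hxy => mul_le_mul_of_nonneg_left
    (Real.logb_le_logb_of_le one_lt_two (add_pos_of_pos_of_nonneg one_pos (mul_nonneg hγ hx))
      (by gcongr)) (by norm_num)

end ShannonRate

section Battery

variable {B : ℝ} {e g b : ℕ → ℝ}

lemma battery_le_capacity (hb1 : b 1 = B)
    (hbrec : ∀ t, 1 ≤ t → b (t + 1) = min (b t - g t + e (t + 1)) B) :
    ∀ t, 1 ≤ t → b t ≤ B := by
  intro t ht
  induction t, ht using Nat.le_induction with
  | base => exact hb1.le
  | succ t ht _ => exact (hbrec t ht).trans_le (min_le_right _ _)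

lemma sum_add_remaining_le (hb1 : b 1 = B)
    (hbrec : ∀ t, 1 ≤ t → b (t + 1) = min (b t - g t + e (t + 1)) B)
    (hgb : ∀ t, 1 ≤ t → g t ≤ b t) {n : ℕ} (hn : 1 ≤ n) :
    ∑ t ∈ Icc 1 n, g t + (b n - g n) ≤ B + ∑ t ∈ Icc 2 n, min (e t) B := by
  induction n, hn using Nat.le_induction with
  | base => simp [hb1]
  | succ n hn ih =>
    have hstore : b (n + 1) ≤ b n - g n + min (e (n + 1)) B := by
      have hrem : 0 ≤ b n - g n := sub_nonneg.2 (hgb n hn)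
      rw [hbrec n hn, ← min_add_add_left]
      exact min_le_min le_rfl (le_add_of_nonneg_left hrem)
    rw [sum_Icc_succ_top (by omega), sum_Icc_succ_top (by omega)]
    linarith

lemma sum_le_capacity_add_sum_min (hb1 : b 1 = B)
    (hbrec : ∀ t, 1 ≤ t → b (t + 1) = min (b t - g t + e (t + 1)) B)
    (hgb : ∀ t, 1 ≤ t → g t ≤ b t) {n : ℕ} (hn : 1 ≤ n) :
    ∑ t ∈ Icc 1 n, g t ≤ B + ∑ t ∈ Icc 2 n, min (e t) B := by
  linarith [sum_add_remaining_le hb1 hbrec hgb hn, hgb n hn]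

end Battery

section Expectation

variable {Ω : Type*} [MeasurableSpace Ω] {P : Measure Ω} [IsProbabilityMeasure P]

lemma ConcaveOn.mean_integral_le_map_mean_integral {s : Set ℝ} {f : ℝ → ℝ}
    (hf : ConcaveOn ℝ s f) (hfc : ContinuousOn f s) (hs : IsClosed s)
    {ι : Type*} {I : Finset ι} (hI : I.Nonempty) {X : ι → Ω → ℝ}
    (hXs : ∀ i ∈ I, ∀ᵐ ω ∂P, X i ω ∈ s) (hX : ∀ i ∈ I, Integrable (X i) P)
    (hfX : ∀ i ∈ I, Integrable (f ∘ X i) P) :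
    1 / (#I : ℝ) * ∑ i ∈ I, ∫ ω, f (X i ω) ∂P
      ≤ f (1 / (#I : ℝ) * ∑ i ∈ I, ∫ ω, X i ω ∂P) := by
  have hw : ∑ _i ∈ I, 1 / (#I : ℝ) = 1 := by
    rw [sum_const, nsmul_eq_mul]
    field_simp [hI.card_pos.ne']
  calc 1 / (#I : ℝ) * ∑ i ∈ I, ∫ ω, f (X i ω) ∂P
      ≤ ∑ i ∈ I, 1 / (#I : ℝ) * f (∫ ω, X i ω ∂P) := by
        rw [mul_sum]
        gcongr with i hi
        exact hf.le_map_integral hfc hs (hXs i hi) (hX i hi) (hfX i hi)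
    _ ≤ f (1 / (#I : ℝ) * ∑ i ∈ I, ∫ ω, X i ω ∂P) := by
        simpa only [smul_eq_mul, mul_sum] using hf.le_map_sum (fun _ _ => by positivity) hw
          fun i hi => hf.1.integral_mem hs (hXs i hi) (hX i hi)

variable {B μ : ℝ} {E g b : ℕ → Ω → ℝ}

lemma measurable_of_online {X : Ω → ℝ} (hEmeas : ∀ t, Measurable (E t)) {t : ℕ}
    (hX : ∃ h : (Fin t → ℝ) → ℝ, Measurable h ∧ ∀ ω, X ω = h (fun i => E (i.1 + 1) ω)) :
    Measurable X := by
  obtain ⟨h, hh, hXh⟩ := hX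
  rw [funext hXh]
  exact hh.comp (measurable_pi_lambda _ fun i => hEmeas _)

lemma sum_integral_le_capacity_add_mul (hB : 0 ≤ B) (hEmeas : ∀ t, Measurable (E t))
    (hEnn : ∀ t ω, 0 ≤ E t ω) (hident : ∀ t, IdentDistrib (E t) (E 1) P P)
    (hμ : μ = ∫ ω, min (E 1 ω) B ∂P) (hb1 : ∀ ω, b 1 ω = B)
    (hbrec : ∀ t, 1 ≤ t → ∀ ω, b (t + 1) ω = min (b t ω - g t ω + E (t + 1) ω) B)
    (hgb : ∀ t, 1 ≤ t → ∀ ω, g t ω ≤ b t ω) (hgint : ∀ t, 1 ≤ t → Integrable (g t) P)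
    {n : ℕ} (hn : 1 ≤ n) :
    ∑ t ∈ Icc 1 n, ∫ ω, g t ω ∂P ≤ B + ((n : ℝ) - 1) * μ := by
  have hminint : ∀ t, Integrable (fun ω => min (E t ω) B) P := fun t =>
    .of_mem_Icc 0 B ((hEmeas t).min measurable_const).aemeasurable
      (ae_of_all _ fun ω => ⟨le_min (hEnn t ω) hB, min_le_right _ _⟩)
  have hminμ : ∀ t, ∫ ω, min (E t ω) B ∂P = μ := fun t => by
    rw [hμ]
    exact ((hident t).comp (measurable_id.min measurable_const)).integral_eq
  have hpath : ∀ ω, ∑ t ∈ Icc 1 n, g t ω ≤ B + ∑ t ∈ Icc 2 n, min (E t ω) B := fun ω =>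
    sum_le_capacity_add_sum_min (hb1 ω) (fun t ht => hbrec t ht ω) (fun t ht => hgb t ht ω) hn
  calc ∑ t ∈ Icc 1 n, ∫ ω, g t ω ∂P
      = ∫ ω, ∑ t ∈ Icc 1 n, g t ω ∂P :=
        (integral_finsetSum _ fun t ht => hgint t (mem_Icc.1 ht).1).symm
    _ ≤ ∫ ω, (B + ∑ t ∈ Icc 2 n, min (E t ω) B) ∂P :=
        integral_mono (integrable_finsetSum _ fun t ht => hgint t (mem_Icc.1 ht).1)
          ((integrable_const B).add (integrable_finsetSum _ fun t _ => hminint t)) hpath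
    _ = B + ((n : ℝ) - 1) * μ := by
        rw [integral_add (integrable_const B) (integrable_finsetSum _ fun t _ => hminint t),
          integral_const, integral_finsetSum _ fun t _ => hminint t,
          sum_congr rfl fun t _ => hminμ t, sum_const, Nat.card_Icc, probReal_univ, one_smul,
          nsmul_eq_mul, show n + 1 - 2 = n - 1 by omega, Nat.cast_sub hn, Nat.cast_one]

end Expectation

theorem stmt_1_general {Ω : Type*} [MeasurableSpace Ω] (P : Measure Ω) [IsProbabilityMeasure P]
    (B γ : ℝ) (hB : 0 < B) (hγ : 0 < γ)
    (E : ℕ → Ω → ℝ) (hEmeas : ∀ t, Measurable (E t))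
    (hEnn : ∀ t ω, 0 ≤ E t ω)
    (hident : ∀ t, IdentDistrib (E t) (E 1) P P)
    (μ : ℝ) (hμ : μ = ∫ ω, min (E 1 ω) B ∂P)
    (g b : ℕ → Ω → ℝ)
    (hb1 : ∀ ω, b 1 ω = B)
    (hbrec : ∀ t, 1 ≤ t → ∀ ω, b (t + 1) ω = min (b t ω - g t ω + E (t + 1) ω) B)
    (hadm : ∀ t, 1 ≤ t → ∀ ω, 0 ≤ g t ω ∧ g t ω ≤ b t ω)
    (honline : ∀ t, 1 ≤ t → ∃ h : (Fin t → ℝ) → ℝ, Measurable h ∧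
      ∀ ω, g t ω = h (fun i => E (i.1 + 1) ω))
    (n : ℕ) (hn : 1 ≤ n) :
    (1 / (n : ℝ)) * ∑ t ∈ Finset.Icc 1 n,
        ∫ ω, (1 / 2) * Real.logb 2 (1 + γ * g t ω) ∂P
      ≤ (1 / 2) * Real.logb 2 (1 + (γ / (n : ℝ)) * B + γ * (((n : ℝ) - 1) / (n : ℝ)) * μ) := by
  have hg : ∀ t, 1 ≤ t → ∀ ω, g t ω ∈ Set.Icc 0 B := fun t ht ω =>
    ⟨(hadm t ht ω).1, (hadm t ht ω).2.trans (battery_le_capacity (e := (E · ω)) (b := (b · ω))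
      (hb1 ω) (fun s hs => hbrec s hs ω) t ht)⟩
  have hgint : ∀ t, 1 ≤ t → Integrable (g t) P := fun t ht =>
    .of_mem_Icc 0 B (measurable_of_online hEmeas (honline t ht)).aemeasurable
      (ae_of_all _ (hg t ht))
  have hrate := monotoneOn_shannonRate hγ.le
  have hrateint : ∀ t, 1 ≤ t → Integrable (shannonRate γ ∘ g t) P := fun t ht =>
    .of_mem_Icc _ _
      (measurable_shannonRate.comp (measurable_of_online hEmeas (honline t ht))).aemeasurable
      (ae_of_all _ fun ω => ⟨hrate Set.self_mem_Ici (hg t ht ω).1 (hg t ht ω).1,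
        hrate (hg t ht ω).1 hB.le (hg t ht ω).2⟩)
  have hcard : (#(Icc 1 n) : ℝ) = n := by simp
  have hmean0 : 0 ≤ 1 / (n : ℝ) * ∑ t ∈ Icc 1 n, ∫ ω, g t ω ∂P :=
    mul_nonneg (by positivity) (sum_nonneg fun t ht =>
      integral_nonneg (fun ω => (hg t (mem_Icc.1 ht).1 ω).1))
  have hmean : 1 / (n : ℝ) * ∑ t ∈ Icc 1 n, ∫ ω, g t ω ∂P ≤ (B + ((n : ℝ) - 1) * μ) / n := by
    rw [one_div_mul_eq_div]
    gcongr
    exact sum_integral_le_capacity_add_mul hB.le hEmeas hEnn hident hμ hb1 hbrec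
      (fun t ht ω => (hadm t ht ω).2) hgint hn
  calc 1 / (n : ℝ) * ∑ t ∈ Icc 1 n, ∫ ω, shannonRate γ (g t ω) ∂P
      ≤ shannonRate γ (1 / (n : ℝ) * ∑ t ∈ Icc 1 n, ∫ ω, g t ω ∂P) := by
        simpa only [hcard] using (concaveOn_shannonRate hγ.le).mean_integral_le_map_mean_integral
          (continuousOn_shannonRate hγ.le) isClosed_Ici (nonempty_Icc.2 hn)
          (fun t ht => ae_of_all _ fun ω => (hg t (mem_Icc.1 ht).1 ω).1)
          (fun t ht => hgint t (mem_Icc.1 ht).1) (fun t ht => hrateint t (mem_Icc.1 ht).1)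
    _ ≤ shannonRate γ ((B + ((n : ℝ) - 1) * μ) / n) := hrate hmean0 (hmean0.trans hmean) hmean
    _ = 1 / 2 * Real.logb 2 (1 + γ / n * B + γ * ((n - 1) / n) * μ) := by
        unfold shannonRate
        ring_nf

/-- **Finite-horizon upper bound on the expected throughput.** For i.i.d. nonnegative
energy arrivals `E`, battery capacity `B > 0`, SNR `γ > 0`, `μ = 𝔼[min (E 1) B]`, and
any admissible online policy `g`, the `n`-horizon expected throughput satisfies
`(1/n) ∑_{t=1}^n 𝔼[½ log₂(1 + γ g t)] ≤ ½ log₂(1 + (γ/n) B + γ ((n-1)/n) μ)`. -/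
theorem stmt_1 {Ω : Type*} [MeasurableSpace Ω] (P : Measure Ω) [IsProbabilityMeasure P]
    (B γ : ℝ) (hB : 0 < B) (hγ : 0 < γ)
    (E : ℕ → Ω → ℝ) (hEmeas : ∀ t, Measurable (E t))
    (hEnn : ∀ t ω, 0 ≤ E t ω)
    (hindep : iIndepFun E P)
    (hident : ∀ t, IdentDistrib (E t) (E 1) P P)
    (μ : ℝ) (hμ : μ = ∫ ω, min (E 1 ω) B ∂P)
    (g b : ℕ → Ω → ℝ)
    (hb1 : ∀ ω, b 1 ω = B)
    (hbrec : ∀ t, 1 ≤ t → ∀ ω, b (t + 1) ω = min (b t ω - g t ω + E (t + 1) ω) B)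
    (hadm : ∀ t, 1 ≤ t → ∀ ω, 0 ≤ g t ω ∧ g t ω ≤ b t ω)
    (honline : ∀ t, 1 ≤ t → ∃ h : (Fin t → ℝ) → ℝ, Measurable h ∧
      ∀ ω, g t ω = h (fun i => E (i.1 + 1) ω))
    (n : ℕ) (hn : 1 ≤ n) :
    (1 / (n : ℝ)) * ∑ t ∈ Finset.Icc 1 n,
        ∫ ω, (1 / 2) * Real.logb 2 (1 + γ * g t ω) ∂P
      ≤ (1 / 2) * Real.logb 2 (1 + (γ / (n : ℝ)) * B + γ * (((n : ℝ) - 1) / (n : ℝ)) * μ) :=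
  stmt_1_general P B γ hB hγ E hEmeas hEnn hident μ hμ g b hb1 hbrec hadm honline n hn
end

section
/- For all real numbers 0 < p < 1, γ > 0, and B̄ > 0, the series ∑_{i=1}^∞ p·(1−p)^{i−1}·½·log₂(1 + γ·B̄·p·(1−p)^{i−1}) is at least ½·log₂(1 + γ·p·B̄) − ((1−p)/(2p))·log₂(1/(1−p)). -/
/-!
Since `q ^ i ≤ 1`, each summand satisfies
`log (1 + c q^i) ≥ log ((1 + c) q^i) = log (1 + c) + i log q`.
Summing this affine lower bound against the geometric weights `p (1-p)^i`, whose total mass is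
`1` and whose mean is `(1-p)/p`, gives the claimed bound.
-/

open Real

lemma logb_add_nat_mul_logb_le_logb_one_add_mul_pow {b c q : ℝ} (hb : 1 < b) (hc : 0 < 1 + c)
    (hq0 : 0 < q) (hq1 : q ≤ 1) (i : ℕ) :
    logb b (1 + c) + i * logb b q ≤ logb b (1 + c * q ^ i) := by
  have hqi : 0 < q ^ i := pow_pos hq0 i
  have hqi1 : q ^ i ≤ 1 := pow_le_one₀ hq0.le hq1
  rw [← logb_pow, ← logb_mul hc.ne' hqi.ne']
  exact logb_le_logb_of_le hb (by positivity) (by nlinarith)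

lemma summable_pow_mul_logb_one_add_mul_pow {b c q : ℝ} (hb : 1 < b) (hc : 0 ≤ c)
    (hq0 : 0 ≤ q) (hq1 : q < 1) :
    Summable fun i : ℕ => q ^ i * logb b (1 + c * q ^ i) := by
  refine ((summable_geometric_of_lt_one hq0 hq1).mul_right (logb b (1 + c))).of_nonneg_of_le
    (fun i => ?_) (fun i => ?_)
  · have : 0 ≤ c * q ^ i := by positivity
    exact mul_nonneg (by positivity) (logb_nonneg hb (by linarith))
  · have hqi1 : q ^ i ≤ 1 := pow_le_one₀ hq0 hq1.le
    have : 0 ≤ c * q ^ i := by positivity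
    exact mul_le_mul_of_nonneg_left
      (logb_le_logb_of_le hb (by linarith) (by nlinarith)) (by positivity)

lemma hasSum_geometric_weight_mul_affine {p : ℝ} (hp : |1 - p| < 1) (a m : ℝ) :
    HasSum (fun i : ℕ => p * (1 - p) ^ i * (a + i * m)) (a + (1 - p) / p * m) := by
  have hp0 : p ≠ 0 := by rintro rfl; simp at hp
  have hnorm : ‖1 - p‖ < 1 := hp
  have hmass : HasSum (fun i : ℕ => (1 - p) ^ i) p⁻¹ := by
    simpa using hasSum_geometric_of_abs_lt_one hp
  have hmean : HasSum (fun i : ℕ => (i : ℝ) * (1 - p) ^ i) ((1 - p) / p ^ 2) := by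
    simpa using hasSum_coe_mul_geometric_of_norm_lt_one hnorm
  have h := (hmass.mul_left (p * a)).add (hmean.mul_left (p * m))
  rw [show p * a * p⁻¹ + p * m * ((1 - p) / p ^ 2) = a + (1 - p) / p * m by field_simp] at h
  exact h.congr_fun fun i => by ring

/-- **Series lower bound for the additive-gap analysis.** For `0 < p < 1`, `γ > 0`,
`B > 0`, the series `∑_{i=1}^∞ p (1-p)^{i-1} ½ log₂(1 + γ B p (1-p)^{i-1})`
(indexed below by `i : ℕ` starting at `0`) is at least
`½ log₂(1 + γ p B) - ((1-p)/(2p)) log₂(1/(1-p))`. -/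
theorem stmt_3 (p γ B : ℝ) (hp0 : 0 < p) (hp1 : p < 1) (hγ : 0 < γ) (hB : 0 < B) :
    (1 / 2) * Real.logb 2 (1 + γ * p * B)
        - ((1 - p) / (2 * p)) * Real.logb 2 (1 / (1 - p))
      ≤ ∑' i : ℕ, p * (1 - p) ^ i * ((1 / 2) * Real.logb 2 (1 + γ * B * p * (1 - p) ^ i)) := by
  have hc : 0 < γ * B * p := by positivity
  have hq : |1 - p| < 1 := by rw [abs_lt]; constructor <;> linarith
  have hlower := hasSum_geometric_weight_mul_affine hq
    (1 / 2 * logb 2 (1 + γ * B * p)) (1 / 2 * logb 2 (1 - p))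
  have hsum := (summable_pow_mul_logb_one_add_mul_pow one_lt_two hc.le
    (sub_nonneg.2 hp1.le) (by linarith : 1 - p < 1)).mul_left (p / 2)
  calc _ = 1 / 2 * logb 2 (1 + γ * B * p) + (1 - p) / p * (1 / 2 * logb 2 (1 - p)) := by
        rw [one_div (1 - p), logb_inv]; ring_nf
    _ ≤ _ := by
      refine hasSum_le (fun i => ?_) hlower (hsum.congr fun i => by ring).hasSum
      have hterm := logb_add_nat_mul_logb_le_logb_one_add_mul_pow (c := γ * B * p) one_lt_two
        (by linarith) (by linarith : 0 < 1 - p) (by linarith) i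
      gcongr
      linarith
end

section
/- For all real numbers 0 < p ≤ 1, γ > 0, and B̄ > 0, the series ∑_{i=1}^∞ p·(1−p)^{i−1}·½·log₂(1 + γ·B̄·p·(1−p)^{i−1}) is at least (1/(2−p))·½·log₂(1 + γ·B̄·p), and hence at least (1/2)·½·log₂(1 + γ·p·B̄). -/
open Real

/-- By Bernoulli's inequality `(1 + x) ^ α ≤ 1 + α x`. -/
lemma Real.mul_logb_one_add_le_logb_one_add_mul {b α x : ℝ} (hb : 1 < b) (hα0 : 0 ≤ α)
    (hα1 : α ≤ 1) (hx : -1 < x) : α * logb b (1 + x) ≤ logb b (1 + α * x) := by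
  have h1x : 0 < 1 + x := by linarith
  have hlog : log ((1 + x) ^ α) ≤ log (1 + α * x) :=
    log_le_log (rpow_pos_of_pos h1x α) (rpow_one_add_le_one_add_mul_self hx.le hα0 hα1)
  rw [log_rpow h1x] at hlog
  rw [logb, logb, mul_div_assoc']
  exact div_le_div_of_nonneg_right hlog (log_pos hb).le

lemma tsum_mul_one_sub_sq_pow {p : ℝ} (hp0 : 0 < p) (hp2 : p < 2) :
    ∑' i : ℕ, p * ((1 - p) ^ 2) ^ i = 1 / (2 - p) := by
  have hq1 : (1 - p) ^ 2 < 1 := by nlinarith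
  rw [tsum_mul_left, tsum_geometric_of_lt_one (sq_nonneg _) hq1]
  have hden : 1 - (1 - p) ^ 2 = p * (2 - p) := by ring
  have h2p : 2 - p ≠ 0 := by linarith
  rw [hden]
  field_simp

section GeometricallyWeightedLog

variable {p s b : ℝ}

lemma summable_mul_one_sub_pow_mul_logb (hp0 : 0 < p) (hp1 : p ≤ 1) (hs : 0 ≤ s) (hb : 1 < b) :
    Summable fun i : ℕ => p * (1 - p) ^ i * logb b (1 + s * (1 - p) ^ i) := by
  have hq0 : 0 ≤ 1 - p := by linarith
  refine Summable.of_nonneg_of_le (fun i => ?_) (fun i => ?_)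
    ((summable_geometric_of_lt_one hq0 (by linarith)).mul_left (p * logb b (1 + s)))
  · have : 0 ≤ logb b (1 + s * (1 - p) ^ i) := logb_nonneg hb (by nlinarith [pow_nonneg hq0 i])
    positivity
  · have hlog : logb b (1 + s * (1 - p) ^ i) ≤ logb b (1 + s) := by
      refine logb_le_logb_of_le hb (by nlinarith [pow_nonneg hq0 i]) ?_
      nlinarith [pow_le_one₀ hq0 (by linarith : 1 - p ≤ 1) (n := i)]
    calc p * (1 - p) ^ i * logb b (1 + s * (1 - p) ^ i)
        ≤ p * (1 - p) ^ i * logb b (1 + s) := by gcongr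
      _ = p * logb b (1 + s) * (1 - p) ^ i := by ring

/-- The `i`-th term is at least `p (1 - p) ^ (2 i) logb b (1 + s)`, whose sum is `1 / (2 - p)`
times `logb b (1 + s)`. -/
lemma one_div_two_sub_mul_logb_le_tsum (hp0 : 0 < p) (hp1 : p ≤ 1) (hs : 0 ≤ s) (hb : 1 < b) :
    1 / (2 - p) * logb b (1 + s) ≤ ∑' i : ℕ, p * (1 - p) ^ i * logb b (1 + s * (1 - p) ^ i) := by
  have hq0 : 0 ≤ 1 - p := by linarith
  have hterm (i : ℕ) : p * ((1 - p) ^ 2) ^ i * logb b (1 + s)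
      ≤ p * (1 - p) ^ i * logb b (1 + s * (1 - p) ^ i) := by
    have hα0 : 0 ≤ (1 - p) ^ i := pow_nonneg hq0 i
    have hconc := mul_logb_one_add_le_logb_one_add_mul hb hα0
      (pow_le_one₀ hq0 (by linarith)) (by linarith : -1 < s)
    calc p * ((1 - p) ^ 2) ^ i * logb b (1 + s)
        = p * (1 - p) ^ i * ((1 - p) ^ i * logb b (1 + s)) := by rw [← pow_mul, pow_mul']; ring
      _ ≤ p * (1 - p) ^ i * logb b (1 + (1 - p) ^ i * s) := by gcongr
      _ = p * (1 - p) ^ i * logb b (1 + s * (1 - p) ^ i) := by rw [mul_comm s]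
  rw [← tsum_mul_one_sub_sq_pow hp0 (by linarith), ← tsum_mul_right]
  refine Summable.tsum_le_tsum hterm ?_ (summable_mul_one_sub_pow_mul_logb hp0 hp1 hs hb)
  exact ((summable_geometric_of_lt_one (sq_nonneg _) (by nlinarith)).mul_left p).mul_right _

end GeometricallyWeightedLog

/-- **Series lower bound for the multiplicative-gap analysis.** For `0 < p ≤ 1`, `γ > 0`,
`B > 0`, the series `∑_{i=1}^∞ p (1-p)^{i-1} ½ log₂(1 + γ B p (1-p)^{i-1})`
(indexed below by `i : ℕ` starting at `0`) is at least `(1/(2-p)) ½ log₂(1 + γ B p)`,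
and hence at least `(1/2) ½ log₂(1 + γ p B)`. -/
theorem stmt_5 (p γ B : ℝ) (hp0 : 0 < p) (hp1 : p ≤ 1) (hγ : 0 < γ) (hB : 0 < B) :
    (1 / (2 - p)) * ((1 / 2) * Real.logb 2 (1 + γ * B * p))
      ≤ ∑' i : ℕ, p * (1 - p) ^ i * ((1 / 2) * Real.logb 2 (1 + γ * B * p * (1 - p) ^ i)) ∧
    (1 / 2) * ((1 / 2) * Real.logb 2 (1 + γ * p * B))
      ≤ ∑' i : ℕ, p * (1 - p) ^ i * ((1 / 2) * Real.logb 2 (1 + γ * B * p * (1 - p) ^ i)) := by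
  have hs : 0 ≤ γ * B * p := by positivity
  have hbound := one_div_two_sub_mul_logb_le_tsum hp0 hp1 hs one_lt_two
  have hsum : ∑' i : ℕ, p * (1 - p) ^ i * ((1 / 2) * logb 2 (1 + γ * B * p * (1 - p) ^ i))
      = 1 / 2 * ∑' i : ℕ, p * (1 - p) ^ i * logb 2 (1 + γ * B * p * (1 - p) ^ i) := by
    rw [← tsum_mul_left]
    exact tsum_congr fun i => by ring
  have hfirst : 1 / (2 - p) * (1 / 2 * logb 2 (1 + γ * B * p))
      ≤ ∑' i : ℕ, p * (1 - p) ^ i * ((1 / 2) * logb 2 (1 + γ * B * p * (1 - p) ^ i)) := by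
    rw [hsum, mul_left_comm]
    exact mul_le_mul_of_nonneg_left hbound (by norm_num)
  refine ⟨hfirst, le_trans ?_ hfirst⟩
  rw [show γ * p * B = γ * B * p by ring]
  have hlog : 0 ≤ logb 2 (1 + γ * B * p) := logb_nonneg one_lt_two (by linarith)
  gcongr
  · linarith
  · linarith
end

section
/- Let 0 < p < 1, B̄ > 0, γ > 0, and let (E_t)_{t≥1} be i.i.d. random variables with P(E_t = B̄) = p and P(E_t = 0) = 1−p. Define the battery process b_1 = B̄ and b_{t+1} = min{(1−p)·b_t + E_{t+1}, B̄}, and the fixed fraction policy g_t = p·b_t. Then liminf_{n→∞} (1/n)∑_{t=1}^n E[½·log₂(1 + γ·g_t)] ≥ ½·log₂(1 + γ·p·B̄) − 1/(2·ln 2). (Note p·B̄ = E[E_1].) -/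
open MeasureTheory ProbabilityTheory Filter Finset

/-!
Write `X t = log (b t / B) ≤ 0`. Since `b t ≤ B`, concavity of `log (1 + γ p ·)` gives
`log (1 + γ p b t) ≥ log (1 + γ p B) + X t`, so it suffices to show `𝔼 X t ≥ -1`. As `E (t+1)`
takes only the values `0` and `B`, the battery either refills (`X (t+1) = 0`) or decays
(`X (t+1) = log (1 - p) + X t`), the latter exactly on the event `E (t+1) = 0`, which is
independent of `b t`. Hence `𝔼 X (t+1) = (1 - p) (log (1 - p) + 𝔼 X t)`, and
`(1 - p) log (1 - p) ≥ -p` makes the bound `-1` invariant.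
-/

theorem Real.log_add_log_div_le_log {a x y : ℝ} (ha : 0 ≤ a) (hx : 0 < x) (hxy : x ≤ y) :
    Real.log (1 + a * y) + Real.log (x / y) ≤ Real.log (1 + a * x) := by
  have hy : 0 < y := hx.trans_le hxy
  rw [← Real.log_mul (by positivity) (by positivity)]
  refine Real.log_le_log (by positivity) ?_
  have hxy' : x / y ≤ 1 := (div_le_one hy).2 hxy
  calc (1 + a * y) * (x / y) = x / y + a * x := by field_simp
    _ ≤ 1 + a * x := by linarith

theorem Real.neg_le_one_sub_mul_log_one_sub {p : ℝ} (hp : p < 1) :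
    -p ≤ (1 - p) * Real.log (1 - p) := by
  have hq : 0 < 1 - p := by linarith
  have := mul_le_mul_of_nonneg_left (Real.one_sub_inv_le_log_of_pos hq) hq.le
  rwa [mul_sub, mul_inv_cancel₀ hq.ne', mul_one, sub_sub_cancel_left] at this

theorem le_liminf_average_of_bounds {f : ℕ → ℝ} {a c : ℝ}
    (hlow : ∀ t, 1 ≤ t → a ≤ f t) (hup : ∀ t, 1 ≤ t → f t ≤ c) :
    a ≤ liminf (fun n : ℕ => (1 / (n : ℝ)) * ∑ t ∈ Icc 1 n, f t) atTop := by
  have hbounds : ∀ n : ℕ, 1 ≤ n →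
      a ≤ (1 / (n : ℝ)) * ∑ t ∈ Icc 1 n, f t ∧ (1 / (n : ℝ)) * ∑ t ∈ Icc 1 n, f t ≤ c := by
    intro n hn
    have hn' : (0 : ℝ) < n := by exact_mod_cast (hn : 0 < n)
    rw [one_div_mul_eq_div, le_div_iff₀ hn', div_le_iff₀ hn']
    constructor
    · simpa [mul_comm] using card_nsmul_le_sum (Icc 1 n) f a fun t ht => hlow t (mem_Icc.1 ht).1
    · simpa [mul_comm] using sum_le_card_nsmul (Icc 1 n) f c fun t ht => hup t (mem_Icc.1 ht).1
  refine le_liminf_of_le (isCoboundedUnder_ge_of_eventually_le atTop (x := c) ?_) ?_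
  · exact eventually_atTop.2 ⟨1, fun n hn => (hbounds n hn).2⟩
  · exact eventually_atTop.2 ⟨1, fun n hn => (hbounds n hn).1⟩

theorem ae_eq_or_eq_of_measure_add_eq_one {Ω : Type*} [MeasurableSpace Ω] {P : Measure Ω}
    [IsProbabilityMeasure P] {X : Ω → ℝ} (hX : Measurable X) {a c : ℝ} (hca : c ≠ a)
    (h : P {ω | X ω = a} + P {ω | X ω = c} = 1) : ∀ᵐ ω ∂P, X ω = a ∨ X ω = c := by
  have hdisj : Disjoint {ω | X ω = a} {ω | X ω = c} :=
    Set.disjoint_left.2 fun ω ha hc => hca (hc.symm.trans ha)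
  rw [ae_iff_measure_eq, Set.ofPred_or, measure_union hdisj (hX (measurableSet_singleton c)), h,
    measure_univ]
  exact ((hX (measurableSet_singleton a)).union (hX (measurableSet_singleton c))).nullMeasurableSet

theorem min_one_sub_mul_add_eq_ite {p B x e : ℝ} (hp0 : 0 ≤ p) (hp1 : p ≤ 1) (hB : 0 < B)
    (hx : x ∈ Set.Icc 0 B) (he : e = 0 ∨ e = B) :
    min ((1 - p) * x + e) B = if e = 0 then (1 - p) * x else B := by
  obtain ⟨hx0, hxB⟩ := hx
  rcases he with rfl | rfl
  · rw [add_zero, if_pos rfl, min_eq_left (by nlinarith)]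
  · rw [if_neg hB.ne', min_eq_right (by nlinarith)]

section Step

variable {Ω : Type*} [MeasurableSpace Ω] {P : Measure Ω}

theorem integrable_log_div_of_ae_mem_Icc [IsFiniteMeasure P] {X : Ω → ℝ} (hX : Measurable X)
    {c B : ℝ} (hc : 0 < c) (hXbd : ∀ᵐ ω ∂P, X ω ∈ Set.Icc c B) :
    Integrable (fun ω => Real.log (X ω / B)) P := by
  refine .of_mem_Icc (Real.log (c / B)) 0
    (Real.measurable_log.comp (hX.div_const B)).aemeasurable ?_
  filter_upwards [hXbd] with ω ⟨hcX, hXB⟩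
  have hB : 0 < B := hc.trans_le (hcX.trans hXB)
  exact ⟨Real.log_le_log (div_pos hc hB) (by gcongr),
    Real.log_nonpos (div_nonneg (hc.le.trans hcX) hB.le) ((div_le_one hB).2 hXB)⟩

theorem integral_log_min_one_sub_mul_add_div [IsProbabilityMeasure P] {X Y : Ω → ℝ} {p c B : ℝ}
    (hp0 : 0 ≤ p) (hp1 : p < 1) (hc : 0 < c) (hB : 0 < B) (hX : Measurable X) (hY : Measurable Y)
    (hXY : IndepFun X Y P) (hXbd : ∀ᵐ ω ∂P, X ω ∈ Set.Icc c B)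
    (hYval : ∀ᵐ ω ∂P, Y ω = 0 ∨ Y ω = B) (hY0 : P {ω | Y ω = 0} = ENNReal.ofReal (1 - p)) :
    ∫ ω, Real.log (min ((1 - p) * X ω + Y ω) B / B) ∂P
      = (1 - p) * (Real.log (1 - p) + ∫ ω, Real.log (X ω / B) ∂P) := by
  set φ : ℝ → ℝ := ({0} : Set ℝ).indicator 1
  set ψ : ℝ → ℝ := fun x => Real.log (1 - p) + Real.log (x / B)
  have hq : 0 < 1 - p := by linarith
  have hae : (fun ω => Real.log (min ((1 - p) * X ω + Y ω) B / B)) =ᵐ[P]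
      fun ω => φ (Y ω) * ψ (X ω) := by
    filter_upwards [hXbd, hYval] with ω hXω hYω
    rw [min_one_sub_mul_add_eq_ite hp0 hp1.le hB ⟨hc.le.trans hXω.1, hXω.2⟩ hYω]
    rcases hYω with h | h
    · simp [φ, ψ, h, mul_div_assoc, Real.log_mul hq.ne' (div_pos (hc.trans_le hXω.1) hB).ne']
    · simp [φ, ψ, h, hB.ne']
  have hφ : Measurable φ := measurable_one.indicator (measurableSet_singleton 0)
  have hψ : Measurable ψ :=
    measurable_const.add (Real.measurable_log.comp (measurable_id.div_const B))
  rw [integral_congr_ae hae]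
  refine ((hXY.symm.comp hφ hψ).integral_fun_mul_eq_mul_integral
    (hφ.comp hY).aestronglyMeasurable (hψ.comp hX).aestronglyMeasurable).trans ?_
  congr 1
  · have hφY : φ ∘ Y = (Y ⁻¹' {0}).indicator 1 := by
      ext ω
      exact (Set.indicator_comp_right Y).symm
    rw [hφY, integral_indicator_one (hY (measurableSet_singleton 0)), measureReal_def,
      show Y ⁻¹' {0} = {ω | Y ω = 0} from rfl, hY0, ENNReal.toReal_ofReal hq.le]
  · simp only [ψ, Function.comp_def]
    rw [integral_add (integrable_const _) (integrable_log_div_of_ae_mem_Icc hX hc hXbd),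
      integral_const, probReal_univ, one_smul]

end Step

section Battery

variable {Ω : Type*} {p B : ℝ} {E b : ℕ → Ω → ℝ}

theorem measurable_battery_biSup_comap [MeasurableSpace Ω] (hb1 : ∀ ω, b 1 ω = B)
    (hbrec : ∀ t, 1 ≤ t → ∀ ω, b (t + 1) ω = min ((1 - p) * b t ω + E (t + 1) ω) B)
    {t : ℕ} (ht : 1 ≤ t) :
    Measurable[⨆ i ∈ Set.Iic t, MeasurableSpace.comap (E i) inferInstance] (b t) := by
  induction t, ht using Nat.le_induction with
  | base => rw [funext hb1]; exact measurable_const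
  | succ t ht ih =>
    have hE : Measurable[⨆ i ∈ Set.Iic (t + 1), MeasurableSpace.comap (E i) inferInstance]
        (E (t + 1)) :=
      (comap_measurable (E (t + 1))).mono
        (le_biSup (fun i => MeasurableSpace.comap (E i) _) (Set.mem_Iic.2 le_rfl)) le_rfl
    have hb := ih.mono (biSup_mono fun i (hi : i ≤ t) => hi.trans t.le_succ) le_rfl
    rw [funext (hbrec t ht)]
    exact ((hb.const_mul _).add hE).min measurable_const

variable [MeasurableSpace Ω] {P : Measure Ω}

theorem measurable_battery (hE : ∀ t, Measurable (E t)) (hb1 : ∀ ω, b 1 ω = B)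
    (hbrec : ∀ t, 1 ≤ t → ∀ ω, b (t + 1) ω = min ((1 - p) * b t ω + E (t + 1) ω) B)
    {t : ℕ} (ht : 1 ≤ t) : Measurable (b t) :=
  (measurable_battery_biSup_comap hb1 hbrec ht).mono
    (iSup₂_le fun i _ => (hE i).comap_le) le_rfl

theorem indepFun_battery_arrival (hE : ∀ t, Measurable (E t)) (hindep : iIndepFun E P)
    (hb1 : ∀ ω, b 1 ω = B)
    (hbrec : ∀ t, 1 ≤ t → ∀ ω, b (t + 1) ω = min ((1 - p) * b t ω + E (t + 1) ω) B)
    {t : ℕ} (ht : 1 ≤ t) : IndepFun (b t) (E (t + 1)) P := by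
  rw [IndepFun_iff_Indep]
  have hpast_future := indep_biSup_compl (fun i => (hE i).comap_le)
    ((iIndepFun_iff_iIndep _ _ _).1 hindep) (Set.Iic t)
  exact indep_of_indep_of_le_right
    (indep_of_indep_of_le_left hpast_future (measurable_battery_biSup_comap hb1 hbrec ht).comap_le)
    (le_biSup (fun i => MeasurableSpace.comap (E i) _) (by simp : t + 1 ∈ (Set.Iic t)ᶜ))

theorem ae_battery_mem_Icc (hp0 : 0 ≤ p) (hp1 : p ≤ 1) (hB : 0 < B)
    (hE : ∀ t, 1 ≤ t → ∀ᵐ ω ∂P, E t ω = 0 ∨ E t ω = B) (hb1 : ∀ ω, b 1 ω = B)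
    (hbrec : ∀ t, 1 ≤ t → ∀ ω, b (t + 1) ω = min ((1 - p) * b t ω + E (t + 1) ω) B)
    {t : ℕ} (ht : 1 ≤ t) : ∀ᵐ ω ∂P, b t ω ∈ Set.Icc ((1 - p) ^ (t - 1) * B) B := by
  have hq : 0 ≤ 1 - p := by linarith
  induction t, ht using Nat.le_induction with
  | base => exact ae_of_all _ fun ω => by simp [hb1]
  | succ t ht ih =>
    filter_upwards [ih, hE (t + 1) (by omega)] with ω ⟨hlo, hhi⟩ he
    have hb0 : 0 ≤ b t ω := (mul_nonneg (pow_nonneg hq _) hB.le).trans hlo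
    rw [hbrec t ht ω, min_one_sub_mul_add_eq_ite hp0 hp1 hB ⟨hb0, hhi⟩ he, Nat.add_sub_cancel]
    split_ifs
    · have hpow : (1 - p) ^ t = (1 - p) * (1 - p) ^ (t - 1) := by
        rw [← pow_succ', Nat.sub_add_cancel ht]
      exact ⟨by rw [hpow, mul_assoc]; exact mul_le_mul_of_nonneg_left hlo hq,
        (mul_le_of_le_one_left hb0 (by linarith)).trans hhi⟩
    · exact ⟨mul_le_of_le_one_left hB.le (pow_le_one₀ hq (by linarith)), le_rfl⟩

theorem neg_one_le_integral_log_battery_div [IsProbabilityMeasure P] (hp0 : 0 ≤ p) (hp1 : p < 1)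
    (hB : 0 < B) (hEmeas : ∀ t, Measurable (E t)) (hindep : iIndepFun E P)
    (hE : ∀ t, 1 ≤ t → ∀ᵐ ω ∂P, E t ω = 0 ∨ E t ω = B)
    (hE0 : ∀ t, 1 ≤ t → P {ω | E t ω = 0} = ENNReal.ofReal (1 - p)) (hb1 : ∀ ω, b 1 ω = B)
    (hbrec : ∀ t, 1 ≤ t → ∀ ω, b (t + 1) ω = min ((1 - p) * b t ω + E (t + 1) ω) B)
    {t : ℕ} (ht : 1 ≤ t) : -1 ≤ ∫ ω, Real.log (b t ω / B) ∂P := by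
  have hq : 0 < 1 - p := by linarith
  induction t, ht using Nat.le_induction with
  | base => simp [hb1, hB.ne']
  | succ t ht ih =>
    simp only [hbrec t ht]
    rw [integral_log_min_one_sub_mul_add_div hp0 hp1 (by positivity) hB
      (measurable_battery hEmeas hb1 hbrec ht) (hEmeas _)
      (indepFun_battery_arrival hEmeas hindep hb1 hbrec ht)
      (ae_battery_mem_Icc hp0 hp1.le hB hE hb1 hbrec ht) (hE _ (by omega)) (hE0 _ (by omega))]
    linarith [Real.neg_le_one_sub_mul_log_one_sub hp1, mul_le_mul_of_nonneg_left ih hq.le]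

end Battery

section Throughput

variable {Ω : Type*} [MeasurableSpace Ω] {P : Measure Ω} {X : Ω → ℝ} {a c B : ℝ}

theorem integrable_log_one_add_mul [IsFiniteMeasure P] (ha : 0 ≤ a) (hX : Measurable X)
    (hXbd : ∀ᵐ ω ∂P, X ω ∈ Set.Icc 0 B) : Integrable (fun ω => Real.log (1 + a * X ω)) P := by
  refine .of_mem_Icc 0 (Real.log (1 + a * B))
    (Real.measurable_log.comp (measurable_const.add (hX.const_mul a))).aemeasurable ?_
  filter_upwards [hXbd] with ω ⟨hX0, hXB⟩
  have : 0 ≤ a * X ω := mul_nonneg ha hX0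
  exact ⟨Real.log_nonneg (by linarith), Real.log_le_log (by linarith) (by gcongr)⟩

theorem integral_log_one_add_mul_le [IsProbabilityMeasure P] (ha : 0 ≤ a) (hX : Measurable X)
    (hXbd : ∀ᵐ ω ∂P, X ω ∈ Set.Icc 0 B) :
    ∫ ω, Real.log (1 + a * X ω) ∂P ≤ Real.log (1 + a * B) := by
  calc ∫ ω, Real.log (1 + a * X ω) ∂P ≤ ∫ _, Real.log (1 + a * B) ∂P := by
        refine integral_mono_ae (integrable_log_one_add_mul ha hX hXbd) (integrable_const _) ?_
        filter_upwards [hXbd] with ω ⟨hX0, hXB⟩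
        have : 0 ≤ a * X ω := mul_nonneg ha hX0
        exact Real.log_le_log (by linarith) (by gcongr)
    _ = Real.log (1 + a * B) := by simp

theorem log_one_add_mul_add_integral_log_div_le [IsProbabilityMeasure P] (ha : 0 ≤ a) (hc : 0 < c)
    (hX : Measurable X) (hXbd : ∀ᵐ ω ∂P, X ω ∈ Set.Icc c B) :
    Real.log (1 + a * B) + ∫ ω, Real.log (X ω / B) ∂P ≤ ∫ ω, Real.log (1 + a * X ω) ∂P := by
  have hXbd' : ∀ᵐ ω ∂P, X ω ∈ Set.Icc 0 B := hXbd.mono fun ω h => ⟨hc.le.trans h.1, h.2⟩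
  calc Real.log (1 + a * B) + ∫ ω, Real.log (X ω / B) ∂P
        = ∫ ω, (Real.log (1 + a * B) + Real.log (X ω / B)) ∂P := by
          rw [integral_add (integrable_const _) (integrable_log_div_of_ae_mem_Icc hX hc hXbd),
            integral_const, probReal_univ, one_smul]
    _ ≤ ∫ ω, Real.log (1 + a * X ω) ∂P := by
          refine integral_mono_ae
            ((integrable_const _).add (integrable_log_div_of_ae_mem_Icc hX hc hXbd))
            (integrable_log_one_add_mul ha hX hXbd') ?_
          filter_upwards [hXbd] with ω ⟨hcX, hXB⟩
          exact Real.log_add_log_div_le_log ha (hc.trans_le hcX) hXB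

end Throughput

/-- **Additive gap of the fixed fraction policy under Bernoulli arrivals.** For i.i.d.
arrivals with `P(E t = B) = p`, `P(E t = 0) = 1 - p`, battery `b 1 = B`,
`b (t+1) = min ((1-p) b t + E (t+1)) B`, and fixed fraction policy `g t = p * b t`, the
long-term average throughput satisfies
`liminf_n (1/n) ∑_{t=1}^n 𝔼[½ log₂(1 + γ p b t)] ≥ ½ log₂(1 + γ p B) - 1/(2 ln 2)`. -/
theorem stmt_6 {Ω : Type*} [MeasurableSpace Ω] (P : Measure Ω) [IsProbabilityMeasure P]
    (p B γ : ℝ) (hp0 : 0 < p) (hp1 : p < 1) (hB : 0 < B) (hγ : 0 < γ)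
    (E : ℕ → Ω → ℝ) (hEmeas : ∀ t, Measurable (E t))
    (hindep : iIndepFun E P)
    (hbern : ∀ t, 1 ≤ t → P {ω | E t ω = B} = ENNReal.ofReal p ∧
      P {ω | E t ω = 0} = ENNReal.ofReal (1 - p))
    (b g : ℕ → Ω → ℝ)
    (hb1 : ∀ ω, b 1 ω = B)
    (hbrec : ∀ t, 1 ≤ t → ∀ ω, b (t + 1) ω = min ((1 - p) * b t ω + E (t + 1) ω) B)
    (hg : ∀ t, 1 ≤ t → ∀ ω, g t ω = p * b t ω) :
    (1 / 2) * Real.logb 2 (1 + γ * p * B) - 1 / (2 * Real.log 2)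
      ≤ liminf (fun n : ℕ => (1 / (n : ℝ)) * ∑ t ∈ Finset.Icc 1 n,
          ∫ ω, (1 / 2) * Real.logb 2 (1 + γ * g t ω) ∂P) atTop := by
  have hE : ∀ t, 1 ≤ t → ∀ᵐ ω ∂P, E t ω = 0 ∨ E t ω = B := fun t ht =>
    ae_eq_or_eq_of_measure_add_eq_one (hEmeas t) hB.ne' (by
      rw [(hbern t ht).2, (hbern t ht).1, ← ENNReal.ofReal_add (by linarith) hp0.le]; norm_num)
  have hbd t (ht : 1 ≤ t) := ae_battery_mem_Icc hp0.le hp1.le hB hE hb1 hbrec ht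
  have hmeas t (ht : 1 ≤ t) := measurable_battery hEmeas hb1 hbrec ht
  have hlogb (x : ℝ) : (1 / 2) * Real.logb 2 x = 1 / (2 * Real.log 2) * Real.log x := by
    rw [Real.logb]; ring
  have hterm t (ht : 1 ≤ t) : ∫ ω, (1 / 2) * Real.logb 2 (1 + γ * g t ω) ∂P
      = 1 / (2 * Real.log 2) * ∫ ω, Real.log (1 + γ * p * b t ω) ∂P := by
    simp_rw [hlogb, hg t ht, ← mul_assoc]
    exact integral_const_mul _ _
  have hκ : 0 ≤ 1 / (2 * Real.log 2) := by positivity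
  have hγp : 0 ≤ γ * p := by positivity
  refine le_liminf_average_of_bounds (c := (1 / 2) * Real.logb 2 (1 + γ * p * B))
    (fun t ht => ?_) (fun t ht => ?_) <;> rw [hterm t ht, hlogb]
  · rw [← mul_sub_one]
    refine mul_le_mul_of_nonneg_left ?_ hκ
    linarith [log_one_add_mul_add_integral_log_div_le hγp (by positivity) (hmeas t ht) (hbd t ht),
      neg_one_le_integral_log_battery_div hp0.le hp1 hB hEmeas hindep hE
        (fun t ht => (hbern t ht).2) hb1 hbrec ht]
  · refine mul_le_mul_of_nonneg_left (integral_log_one_add_mul_le hγp (hmeas t ht) ?_) hκ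
    filter_upwards [hbd t ht] with ω hω
    exact ⟨(by positivity : (0:ℝ) ≤ (1 - p) ^ (t - 1) * B).trans hω.1, hω.2⟩
end

section
/- Fix B̄ > 0, γ > 0, and a probability measure ν supported on [0, B̄] with mean μ = ∫ e dν(e); set q = μ/B̄. Define the n-horizon value functions of the fixed fraction policy recursively by W_1^ν(x) = ½·log₂(1 + γ·q·x) and n·W_n^ν(x) = ½·log₂(1 + γ·q·x) + (n−1)·∫ W_{n−1}^ν(min{(1−q)·x + e, B̄}) dν(e) for x ∈ [0, B̄]. Let ν̂ be the Bernoulli measure on [0, B̄] with ν̂({B̄}) = q and ν̂({0}) = 1−q (which has the same mean μ). Then for every n ≥ 1 and every x ∈ [0, B̄], W_n^ν(x) ≥ W_n^{ν̂}(x): i.e., among all i.i.d. energy-arrival distributions on [0, B̄] with mean μ, the Bernoulli distribution yields the smallest n-horizon expected throughput under the fixed fraction policy, for every horizon n and every initial battery level x. -/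
open MeasureTheory Set

/-!
By induction on the horizon, the Bernoulli value functions are monotone and concave in the
battery level: the reward is, and the Bernoulli recursion only combines the values at `B` and at
`(1 - q) x`. For such an `f` on `[0, B]` and an arrival `e ∈ [0, B]`, `f (min ((1 - q) x + e) B)`
lies above the affine function of `e` that interpolates `f ((1 - q) x)` at `e = 0` and `f B` at
`e = B`. Integrated against any `ν` of mean `q B`, this affine function gives exactly the
Bernoulli average `q f B + (1 - q) f ((1 - q) x)`, which closes the induction.
-/

lemma ConcaveOn.add_div_mul_le_apply_min_add {f : ℝ → ℝ} {B : ℝ} (hB : 0 < B)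
    (hconc : ConcaveOn ℝ (Icc 0 B) f) (hmono : MonotoneOn f (Icc 0 B)) {y e : ℝ}
    (hy : y ∈ Icc 0 B) (he : e ∈ Icc 0 B) :
    f y + (f B - f y) / B * e ≤ f (min (y + e) B) := by
  set t := e / B
  have ht : t ∈ Icc 0 1 := ⟨div_nonneg he.1 hB.le, (div_le_one hB).2 he.2⟩
  have hte : t * B = e := div_mul_cancel₀ e hB.ne'
  have hcomb : (1 - t) * y + t * B ∈ Icc 0 B :=
    ⟨by nlinarith [ht.1, ht.2, hy.1], by nlinarith [ht.1, ht.2, hy.2]⟩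
  have hmin : min (y + e) B ∈ Icc 0 B :=
    ⟨le_min (by linarith [hy.1, he.1]) hB.le, min_le_right _ _⟩
  calc f y + (f B - f y) / B * e = (1 - t) • f y + t • f B := by
        rw [smul_eq_mul, smul_eq_mul, ← hte]; field_simp; ring
    _ ≤ f ((1 - t) • y + t • B) :=
      hconc.2 hy ⟨hB.le, le_rfl⟩ (by linarith [ht.2]) ht.1 (by ring)
    _ ≤ f (min (y + e) B) :=
      hmono hcomb hmin (le_min (by nlinarith [mul_nonneg ht.1 hy.1]) hcomb.2)

lemma monotoneOn_half_logb_one_add_mul {c : ℝ} (hc : 0 ≤ c) :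
    MonotoneOn (fun x : ℝ => 1 / 2 * Real.logb 2 (1 + c * x)) (Ici 0) := by
  intro x hx y _ hxy
  have : 0 < 1 + c * x := by nlinarith [mul_nonneg hc (mem_Ici.1 hx)]
  dsimp only
  gcongr
  norm_num

lemma concaveOn_half_logb_one_add_mul {c : ℝ} (hc : 0 ≤ c) :
    ConcaveOn ℝ (Ici 0) fun x : ℝ => 1 / 2 * Real.logb 2 (1 + c * x) := by
  have hlog := (strictConcaveOn_log_Ioi.concaveOn.comp_affineMap
    (AffineMap.lineMap (1 : ℝ) (1 + c))).subset (fun x hx => by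
      simp [AffineMap.lineMap_apply_module']; nlinarith [mul_nonneg hc (mem_Ici.1 hx)])
    (convex_Ici 0)
  refine (hlog.smul (by positivity : (0 : ℝ) ≤ 1 / (2 * Real.log 2))).congr fun x _ => ?_
  simp [Real.logb, AffineMap.lineMap_apply_module']
  ring_nf

namespace FixedFraction

/-- The `max 0` only matters off the support of the arrivals: it makes the level land in
`[0, B]` unconditionally. -/
noncomputable def nextLevel (B q x e : ℝ) : ℝ := max 0 (min ((1 - q) * x + e) B)

/-- Unlike the `W` of the theorem, these value functions are measurable, so the integrals in
their recursion are not junk values; `eqOn_value_of_recursion` identifies the two on `[0, B]`. -/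
noncomputable def value (B q : ℝ) (r : ℝ → ℝ) (ν : Measure ℝ) : ℕ → ℝ → ℝ
  | 0 => fun _ => 0
  | n + 1 => fun x => (r x + n * ∫ e, value B q r ν n (nextLevel B q x e) ∂ν) / (n + 1)

noncomputable def bernoulliMeasure (B q : ℝ) : Measure ℝ :=
  ENNReal.ofReal q • Measure.dirac B + ENNReal.ofReal (1 - q) • Measure.dirac 0

variable {B q : ℝ} {r : ℝ → ℝ} {ν : Measure ℝ}

@[simp] lemma value_zero (x : ℝ) : value B q r ν 0 x = 0 := rfl

lemma value_succ (n : ℕ) (x : ℝ) : value B q r ν (n + 1) x =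
    (r x + n * ∫ e, value B q r ν n (nextLevel B q x e) ∂ν) / (n + 1) := rfl

lemma nextLevel_mem_Icc (hB : 0 ≤ B) (x e : ℝ) : nextLevel B q x e ∈ Icc 0 B :=
  ⟨le_max_left _ _, max_le hB (min_le_right _ _)⟩

lemma nextLevel_eq_min (hB : 0 ≤ B) (hq : q ≤ 1) {x e : ℝ} (hx : 0 ≤ x) (he : 0 ≤ e) :
    nextLevel B q x e = min ((1 - q) * x + e) B :=
  max_eq_right (le_min (add_nonneg (mul_nonneg (sub_nonneg.2 hq) hx) he) hB)

lemma measurable_nextLevel : Measurable fun p : ℝ × ℝ => nextLevel B q p.1 p.2 := by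
  unfold nextLevel; fun_prop

lemma measurable_value (hr : Measurable r) (ν : Measure ℝ) [SFinite ν] :
    ∀ n, Measurable (value B q r ν n)
  | 0 => measurable_const
  | n + 1 => by
    have hint : Measurable fun x => ∫ e, value B q r ν n (nextLevel B q x e) ∂ν :=
      ((measurable_value hr ν n).comp measurable_nextLevel).stronglyMeasurable
        |>.integral_prod_right' |>.measurable
    exact (hr.add (hint.const_mul _)).div_const _

lemma abs_value_le [IsProbabilityMeasure ν] (hB : 0 ≤ B) {C : ℝ}
    (hr : ∀ x ∈ Icc 0 B, |r x| ≤ C) : ∀ n, ∀ x ∈ Icc 0 B, |value B q r ν n x| ≤ C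
  | 0, _, _ => by simpa using (abs_nonneg _).trans (hr 0 ⟨le_rfl, hB⟩)
  | n + 1, x, hx => by
    have hI : |∫ e, value B q r ν n (nextLevel B q x e) ∂ν| ≤ C := by
      simpa using norm_integral_le_of_norm_le_const (μ := ν)
        (f := fun e => value B q r ν n (nextLevel B q x e))
        (.of_forall fun e => abs_value_le hB hr n _ (nextLevel_mem_Icc hB x e))
    rw [value_succ, abs_div, abs_of_pos (by positivity : (0 : ℝ) < n + 1),
      div_le_iff₀ (by positivity)]
    calc |r x + n * ∫ e, value B q r ν n (nextLevel B q x e) ∂ν|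
        ≤ |r x| + n * |∫ e, value B q r ν n (nextLevel B q x e) ∂ν| := by
          simpa [abs_mul] using
            abs_add_le (r x) (n * ∫ e, value B q r ν n (nextLevel B q x e) ∂ν)
      _ ≤ C + n * C := by gcongr; exact hr x hx
      _ = C * (n + 1) := by ring

lemma integrable_value_comp_nextLevel [IsProbabilityMeasure ν] (hB : 0 ≤ B)
    (hr : Measurable r) (hmono : MonotoneOn r (Icc 0 B)) (n : ℕ) (x : ℝ) :
    Integrable (fun e => value B q r ν n (nextLevel B q x e)) ν := by
  have hbound : ∀ y ∈ Icc 0 B, |r y| ≤ max |r 0| |r B| := fun y hy =>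
    abs_le_max_abs_abs (hmono ⟨le_rfl, hB⟩ hy hy.1) (hmono hy ⟨hB, le_rfl⟩ hy.2)
  refine .of_bound (((measurable_value hr ν n).comp
    (measurable_nextLevel.comp measurable_prodMk_left)).aestronglyMeasurable) _
    (.of_forall fun e => abs_value_le hB hbound n _ (nextLevel_mem_Icc hB x e))

lemma one_sub_mul_mem_Icc (hq : q ∈ Icc 0 1) {x : ℝ} (hx : x ∈ Icc 0 B) :
    (1 - q) * x ∈ Icc 0 B :=
  ⟨mul_nonneg (by linarith [hq.2]) hx.1, by nlinarith [hq.1, hx.1, hx.2]⟩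

lemma integral_bernoulliMeasure (hq : q ∈ Icc 0 1) (f : ℝ → ℝ) :
    ∫ e, f e ∂bernoulliMeasure B q = q * f B + (1 - q) * f 0 := by
  rw [bernoulliMeasure,
    integral_add_measure ((integrable_dirac (by simp)).smul_measure ENNReal.ofReal_ne_top)
      ((integrable_dirac (by simp)).smul_measure ENNReal.ofReal_ne_top),
    integral_smul_measure, integral_smul_measure, integral_dirac, integral_dirac,
    ENNReal.toReal_ofReal hq.1, ENNReal.toReal_ofReal (by linarith [hq.2]), smul_eq_mul,
    smul_eq_mul]

lemma ae_nonneg_bernoulliMeasure (hB : 0 ≤ B) : ∀ᵐ e ∂bernoulliMeasure B q, 0 ≤ e :=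
  ae_add_measure_iff.2 ⟨Measure.ae_smul_measure (by rw [ae_dirac_eq]; exact hB) _,
    Measure.ae_smul_measure (by rw [ae_dirac_eq]; exact le_refl (0 : ℝ)) _⟩

lemma value_bernoulliMeasure_succ (hB : 0 ≤ B) (hq : q ∈ Icc 0 1) (n : ℕ) {x : ℝ}
    (hx : x ∈ Icc 0 B) :
    value B q r (bernoulliMeasure B q) (n + 1) x =
      (r x + n * (q * value B q r (bernoulliMeasure B q) n B
        + (1 - q) * value B q r (bernoulliMeasure B q) n ((1 - q) * x))) / (n + 1) := by
  have hx' := one_sub_mul_mem_Icc hq hx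
  have hB' : nextLevel B q x B = B := by
    rw [nextLevel_eq_min hB hq.2 hx.1 hB]; exact min_eq_right (by linarith [hx'.1])
  have h0 : nextLevel B q x 0 = (1 - q) * x := by
    rw [nextLevel_eq_min hB hq.2 hx.1 le_rfl, add_zero]; exact min_eq_left hx'.2
  rw [value_succ, integral_bernoulliMeasure hq, hB', h0]

lemma monotoneOn_value_bernoulliMeasure (hB : 0 ≤ B) (hq : q ∈ Icc 0 1)
    (hmono : MonotoneOn r (Icc 0 B)) :
    ∀ n, MonotoneOn (value B q r (bernoulliMeasure B q) n) (Icc 0 B)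
  | 0 => fun _ _ _ _ _ => le_rfl
  | n + 1 => fun x hx y hy hxy => by
    have h1q : 0 ≤ 1 - q := by linarith [hq.2]
    rw [value_bernoulliMeasure_succ hB hq n hx, value_bernoulliMeasure_succ hB hq n hy]
    gcongr
    · exact hmono hx hy hxy
    · exact monotoneOn_value_bernoulliMeasure hB hq hmono n (one_sub_mul_mem_Icc hq hx)
        (one_sub_mul_mem_Icc hq hy) (by gcongr)

lemma concaveOn_value_bernoulliMeasure (hB : 0 ≤ B) (hq : q ∈ Icc 0 1)
    (hconc : ConcaveOn ℝ (Icc 0 B) r) :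
    ∀ n, ConcaveOn ℝ (Icc 0 B) (value B q r (bernoulliMeasure B q) n)
  | 0 => concaveOn_const 0 (convex_Icc 0 B)
  | n + 1 => by
    set f := value B q r (bernoulliMeasure B q) n
    have h1q : 0 ≤ 1 - q := by linarith [hq.2]
    have hcomp :=
      ((concaveOn_value_bernoulliMeasure hB hq hconc n).comp_linearMap
        ((1 - q) • LinearMap.id)).subset (fun x hx => by simpa using one_sub_mul_mem_Icc hq hx)
        (convex_Icc 0 B)
    refine (((hconc.add (hcomp.smul (mul_nonneg n.cast_nonneg h1q))).add_const
      (n * q * f B)).smul (by positivity : (0 : ℝ) ≤ 1 / (n + 1))).congr (fun x hx => ?_)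
    rw [value_bernoulliMeasure_succ hB hq n hx]
    simp only [Pi.add_apply, Function.comp_apply, LinearMap.smul_apply, LinearMap.id_apply,
      smul_eq_mul]
    ring

theorem value_bernoulliMeasure_le_value [IsProbabilityMeasure ν] (hB : 0 < B)
    (hq : q ∈ Icc 0 1) (hν : ∀ᵐ e ∂ν, e ∈ Icc 0 B) (hmean : ∫ e, e ∂ν = q * B)
    (hr : Measurable r) (hmono : MonotoneOn r (Icc 0 B)) (hconc : ConcaveOn ℝ (Icc 0 B) r) :
    ∀ n, ∀ x ∈ Icc 0 B, value B q r (bernoulliMeasure B q) n x ≤ value B q r ν n x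
  | 0, _, _ => le_rfl
  | n + 1, x, hx => by
    set f := value B q r (bernoulliMeasure B q) n
    set y := (1 - q) * x
    have hy : y ∈ Icc 0 B := one_sub_mul_mem_Icc hq hx
    have hchord :
        ∀ᵐ e ∂ν, f y + (f B - f y) / B * e ≤ value B q r ν n (nextLevel B q x e) := by
      filter_upwards [hν] with e he
      calc f y + (f B - f y) / B * e ≤ f (nextLevel B q x e) := by
            rw [nextLevel_eq_min hB.le hq.2 hx.1 he.1]
            exact (concaveOn_value_bernoulliMeasure hB.le hq hconc n).add_div_mul_le_apply_min_add
              hB (monotoneOn_value_bernoulliMeasure hB.le hq hmono n) hy he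
        _ ≤ value B q r ν n (nextLevel B q x e) :=
            value_bernoulliMeasure_le_value hB hq hν hmean hr hmono hconc n _
              (nextLevel_mem_Icc hB.le x e)
    have hid : Integrable (fun e : ℝ => e) ν := .of_mem_Icc 0 B aemeasurable_id hν
    have hmean_chord : ∫ e, f y + (f B - f y) / B * e ∂ν = q * f B + (1 - q) * f y := by
      rw [integral_add (integrable_const _) (hid.const_mul _), integral_const_mul, hmean,
        integral_const, probReal_univ, one_smul]
      field_simp
      ring
    have hint : q * f B + (1 - q) * f y ≤ ∫ e, value B q r ν n (nextLevel B q x e) ∂ν :=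
      hmean_chord ▸ integral_mono_ae ((integrable_const _).add (hid.const_mul _))
        (integrable_value_comp_nextLevel hB.le hr hmono n x) hchord
    rw [value_bernoulliMeasure_succ hB.le hq n hx, value_succ]
    gcongr

theorem eqOn_value_of_recursion {W : ℕ → ℝ → ℝ} (hB : 0 ≤ B) (hq : q ≤ 1)
    (hν : ∀ᵐ e ∂ν, 0 ≤ e) (hW1 : ∀ x ∈ Icc 0 B, W 1 x = r x)
    (hWrec : ∀ n : ℕ, 1 ≤ n → ∀ x ∈ Icc 0 B,
      ((n : ℝ) + 1) * W (n + 1) x = r x + n * ∫ e, W n (min ((1 - q) * x + e) B) ∂ν) :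
    ∀ n, 1 ≤ n → EqOn (W n) (value B q r ν n) (Icc 0 B) := by
  intro n hn
  induction n, hn using Nat.le_induction with
  | base => intro x hx; simp [value_succ, hW1 x hx]
  | succ n hn ih =>
    intro x hx
    have hint : ∫ e, W n (min ((1 - q) * x + e) B) ∂ν
        = ∫ e, value B q r ν n (nextLevel B q x e) ∂ν := by
      refine integral_congr_ae ?_
      filter_upwards [hν] with e he
      rw [← nextLevel_eq_min hB hq hx.1 he]
      exact ih (nextLevel_mem_Icc hB x e)
    rw [value_succ, eq_div_iff (by positivity), mul_comm, hWrec n hn x hx, hint]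

end FixedFraction

open FixedFraction

/-- **Bernoulli is the worst-case arrival distribution for the fixed fraction policy.**
Fix `B > 0`, `γ > 0` and a probability measure `ν` supported on `[0, B]` with mean `μ`;
set `q = μ / B`. Let `W n` be the `n`-horizon value function of the fixed fraction policy
under `ν` (satisfying the stated recursion) and let `Wb n` be the corresponding value
function under the Bernoulli measure `ν̂` on `{0, B}` with `ν̂({B}) = q` (which has the
same mean `μ`). Then `W n x ≥ Wb n x` for all `n ≥ 1` and `x ∈ [0, B]`. -/
theorem stmt_9 (B γ : ℝ) (hB : 0 < B) (hγ : 0 < γ)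
    (ν : Measure ℝ) [IsProbabilityMeasure ν]
    (hsupp : ∀ᵐ e ∂ν, e ∈ Set.Icc 0 B)
    (μ q : ℝ) (hμ : μ = ∫ e, e ∂ν) (hq : q = μ / B)
    (νhat : Measure ℝ)
    (hνhat : νhat = ENNReal.ofReal q • Measure.dirac B
      + ENNReal.ofReal (1 - q) • Measure.dirac 0)
    (W Wb : ℕ → ℝ → ℝ)
    (hW1 : ∀ x ∈ Set.Icc (0:ℝ) B, W 1 x = (1 / 2) * Real.logb 2 (1 + γ * q * x))
    (hWrec : ∀ n : ℕ, 1 ≤ n → ∀ x ∈ Set.Icc (0:ℝ) B,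
      ((n : ℝ) + 1) * W (n + 1) x = (1 / 2) * Real.logb 2 (1 + γ * q * x)
        + (n : ℝ) * ∫ e, W n (min ((1 - q) * x + e) B) ∂ν)
    (hWb1 : ∀ x ∈ Set.Icc (0:ℝ) B, Wb 1 x = (1 / 2) * Real.logb 2 (1 + γ * q * x))
    (hWbrec : ∀ n : ℕ, 1 ≤ n → ∀ x ∈ Set.Icc (0:ℝ) B,
      ((n : ℝ) + 1) * Wb (n + 1) x = (1 / 2) * Real.logb 2 (1 + γ * q * x)
        + (n : ℝ) * ∫ e, Wb n (min ((1 - q) * x + e) B) ∂νhat) :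
    ∀ n : ℕ, 1 ≤ n → ∀ x ∈ Set.Icc (0:ℝ) B, Wb n x ≤ W n x := by
  intro n hn x hx
  have hmean : ∫ e, e ∂ν = q * B := by rw [hq, hμ, div_mul_cancel₀ _ hB.ne']
  have hqB : q * B ∈ Icc 0 B := hmean ▸ (convex_Icc 0 B).integral_mem isClosed_Icc hsupp
    (.of_mem_Icc 0 B aemeasurable_id hsupp)
  have hq01 : q ∈ Icc 0 1 :=
    ⟨(mul_nonneg_iff_of_pos_right hB).1 hqB.1, (mul_le_iff_le_one_left hB).1 hqB.2⟩
  have hγq : 0 ≤ γ * q := mul_nonneg hγ.le hq01.1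
  subst hνhat
  rw [eqOn_value_of_recursion hB.le hq01.2 (hsupp.mono fun e he => he.1) hW1 hWrec n hn hx,
    eqOn_value_of_recursion (ν := bernoulliMeasure B q) hB.le hq01.2
      (ae_nonneg_bernoulliMeasure hB.le) hWb1 hWbrec n hn hx]
  exact value_bernoulliMeasure_le_value hB hq01 hsupp hmean (by unfold Real.logb; fun_prop)
    ((monotoneOn_half_logb_one_add_mul hγq).mono Icc_subset_Ici_self)
    ((concaveOn_half_logb_one_add_mul hγq).subset Icc_subset_Ici_self (convex_Icc 0 B)) n x hx
end

section
/- Fix B̄ > 0, γ > 0, 0 ≤ q ≤ 1, and define W_n : [0, B̄] → ℝ recursively by W_1(x) = ½·log₂(1 + γ·q·x) and n·W_n(x) = ½·log₂(1 + γ·q·x) + q·(n−1)·W_{n−1}(B̄) + (1−q)·(n−1)·W_{n−1}((1−q)·x). Then for every n ≥ 1, the function W_n is concave and nondecreasing on [0, B̄]. -/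
/-!
`x ↦ ½ log₂(1 + γ q x)` is concave and nondecreasing on `[0, ∞)`, and both properties are
preserved by precomposition with `x ↦ (1 - q) x` (which maps `[0, B]` into itself), by adding
constants and by nonnegative linear combinations. Hence they pass from `W n` to `W (n + 1)`
through the recursion.
-/

open Set

lemma concaveOn_logb_one_add_mul {b c : ℝ} (hb : 1 < b) (hc : 0 ≤ c) :
    ConcaveOn ℝ (Ici 0) fun x => Real.logb b (1 + c * x) := by
  refine ⟨convex_Ici 0, fun x hx y hy s t hs ht hst => ?_⟩
  have hx' : 0 < 1 + c * x := by nlinarith [mem_Ici.1 hx]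
  have hy' : 0 < 1 + c * y := by nlinarith [mem_Ici.1 hy]
  have hlog := strictConcaveOn_log_Ioi.concaveOn.2 hx' hy' hs ht hst
  have hsplit : 1 + c * (s * x + t * y) = s * (1 + c * x) + t * (1 + c * y) := by
    linear_combination -hst
  simp only [smul_eq_mul, Real.logb] at hlog ⊢
  rw [hsplit, mul_div_assoc', mul_div_assoc', ← add_div]
  exact div_le_div_of_nonneg_right hlog (Real.log_pos hb).le

lemma monotoneOn_logb_one_add_mul {b c : ℝ} (hb : 1 < b) (hc : 0 ≤ c) :
    MonotoneOn (fun x => Real.logb b (1 + c * x)) (Ici 0) := fun x hx y _ hxy =>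
  Real.logb_le_logb_of_le hb (by nlinarith [mem_Ici.1 hx]) (by nlinarith)

lemma mapsTo_mul_Icc_zero {a B : ℝ} (ha₀ : 0 ≤ a) (ha₁ : a ≤ 1) :
    MapsTo (a * ·) (Icc 0 B) (Icc 0 B) := fun _ ⟨hx₀, hx₁⟩ =>
  ⟨mul_nonneg ha₀ hx₀, by nlinarith⟩

lemma ConcaveOn.comp_const_mul {s t : Set ℝ} {f : ℝ → ℝ} (hf : ConcaveOn ℝ s f) (a : ℝ)
    (ht : Convex ℝ t) (hts : MapsTo (a * ·) t s) : ConcaveOn ℝ t fun x => f (a * x) :=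
  (hf.comp_linearMap (LinearMap.mul ℝ ℝ a)).subset hts ht

lemma MonotoneOn.comp_const_mul {s t : Set ℝ} {f : ℝ → ℝ} (hf : MonotoneOn f s) {a : ℝ}
    (ha : 0 ≤ a) (hts : MapsTo (a * ·) t s) : MonotoneOn (fun x => f (a * x)) t :=
  hf.comp ((monotone_mul_left_of_nonneg ha).monotoneOn t) hts

lemma concaveOn_monotoneOn_of_mul_eq {s : Set ℝ} {f g h : ℝ → ℝ} {a c : ℝ} (b : ℝ)
    (ha : 0 < a) (hc : 0 ≤ c) (hgc : ConcaveOn ℝ s g) (hgm : MonotoneOn g s)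
    (hhc : ConcaveOn ℝ s h) (hhm : MonotoneOn h s)
    (hf : ∀ x ∈ s, a * f x = g x + b + c * h x) :
    ConcaveOn ℝ s f ∧ MonotoneOn f s := by
  have hf' : EqOn (a⁻¹ • (g + (fun _ => b) + c • h)) f s := fun x hx => by
    simp only [Pi.smul_apply, Pi.add_apply, smul_eq_mul, ← hf x hx]
    field_simp
  refine ⟨(((hgc.add_const b).add (hhc.smul hc)).smul (inv_nonneg.2 ha.le)).congr hf', ?_⟩
  refine MonotoneOn.congr (fun x hx y hy hxy => ?_) hf'
  simp only [Pi.smul_apply, Pi.add_apply, smul_eq_mul]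
  gcongr
  exacts [hgm hx hy hxy, hhm hx hy hxy]

theorem stmt_10_general (B γ q : ℝ) (hγ : 0 < γ) (hq0 : 0 ≤ q) (hq1 : q ≤ 1)
    (W : ℕ → ℝ → ℝ)
    (hW1 : ∀ x ∈ Set.Icc (0:ℝ) B, W 1 x = (1 / 2) * Real.logb 2 (1 + γ * q * x))
    (hWrec : ∀ n : ℕ, 1 ≤ n → ∀ x ∈ Set.Icc (0:ℝ) B,
      ((n : ℝ) + 1) * W (n + 1) x = (1 / 2) * Real.logb 2 (1 + γ * q * x)
        + q * (n : ℝ) * W n B + (1 - q) * (n : ℝ) * W n ((1 - q) * x)) :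
    ∀ n : ℕ, 1 ≤ n →
      ConcaveOn ℝ (Set.Icc 0 B) (W n) ∧ MonotoneOn (W n) (Set.Icc 0 B) := by
  have hγq : 0 ≤ γ * q := by positivity
  have hLc : ConcaveOn ℝ (Icc 0 B) fun x => (1 / 2) * Real.logb 2 (1 + γ * q * x) :=
    ((concaveOn_logb_one_add_mul one_lt_two hγq).smul (by norm_num)).subset
      Icc_subset_Ici_self (convex_Icc 0 B)
  have hLm : MonotoneOn (fun x => (1 / 2) * Real.logb 2 (1 + γ * q * x)) (Icc 0 B) :=
    fun x hx y hy hxy => mul_le_mul_of_nonneg_left (monotoneOn_logb_one_add_mul one_lt_two hγq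
      (Icc_subset_Ici_self hx) (Icc_subset_Ici_self hy) hxy) (by norm_num)
  have hscale : MapsTo ((1 - q) * ·) (Icc 0 B) (Icc 0 B) :=
    mapsTo_mul_Icc_zero (by linarith) (by linarith)
  intro n hn
  induction n, hn using Nat.le_induction with
  | base => exact ⟨hLc.congr fun x hx => (hW1 x hx).symm, hLm.congr fun x hx => (hW1 x hx).symm⟩
  | succ n hn ih =>
    exact concaveOn_monotoneOn_of_mul_eq _ (by positivity)
      (mul_nonneg (sub_nonneg.2 hq1) n.cast_nonneg)
      hLc hLm (ih.1.comp_const_mul _ (convex_Icc 0 B) hscale)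
      (ih.2.comp_const_mul (by linarith) hscale) (hWrec n hn)

/-- **Concavity and monotonicity of the Bernoulli value functions.** Fix `B > 0`,
`γ > 0`, `0 ≤ q ≤ 1`, and let `W n` satisfy `W 1 x = ½ log₂(1 + γ q x)` and
`(n+1) W (n+1) x = ½ log₂(1 + γ q x) + q n W n B + (1-q) n W n ((1-q) x)` on `[0, B]`.
Then every `W n`, `n ≥ 1`, is concave and nondecreasing on `[0, B]`. -/
theorem stmt_10 (B γ q : ℝ) (hB : 0 < B) (hγ : 0 < γ) (hq0 : 0 ≤ q) (hq1 : q ≤ 1)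
    (W : ℕ → ℝ → ℝ)
    (hW1 : ∀ x ∈ Set.Icc (0:ℝ) B, W 1 x = (1 / 2) * Real.logb 2 (1 + γ * q * x))
    (hWrec : ∀ n : ℕ, 1 ≤ n → ∀ x ∈ Set.Icc (0:ℝ) B,
      ((n : ℝ) + 1) * W (n + 1) x = (1 / 2) * Real.logb 2 (1 + γ * q * x)
        + q * (n : ℝ) * W n B + (1 - q) * (n : ℝ) * W n ((1 - q) * x)) :
    ∀ n : ℕ, 1 ≤ n →
      ConcaveOn ℝ (Set.Icc 0 B) (W n) ∧ MonotoneOn (W n) (Set.Icc 0 B) :=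
  stmt_10_general B γ q hγ hq0 hq1 W hW1 hWrec
end

section
/- Let (E_t)_{t≥1} be i.i.d. nonnegative random variables, B̄ > 0, γ > 0, μ = E[min{E_1, B̄}] > 0, and q = μ/B̄. Define the battery process b_1 = B̄, b_{t+1} = min{(1−q)·b_t + min{E_{t+1}, B̄}, B̄}, and the fixed fraction policy g_t = q·b_t. Then liminf_{n→∞} (1/n)∑_{t=1}^n E[½·log₂(1 + γ·g_t)] ≥ ½·log₂(1 + γ·μ) − 1/(2·ln 2). -/
open MeasureTheory ProbabilityTheory Filter Finset

/-!
Normalize `x t = b t / B` and `u t = min (E t) B / B`, so that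
`x (t + 1) = min ((1 - q) x t + u (t + 1)) 1` with `𝔼 u t = q`. Since `x t ≤ 1`,
`½ log₂ (1 + γ μ x t) ≥ ½ log₂ (1 + γ μ) + log (x t) / (2 ln 2)`, so it suffices that
`𝔼 log (x t) ≥ -1`. Concavity of `log` gives `log x (t + 1) ≥ (1 - u (t + 1)) log ((1 - q) x t)`;
as `u (t + 1)` is independent of `x t`, taking expectations yields
`𝔼 log x (t + 1) ≥ (1 - q) (log (1 - q) + 𝔼 log (x t))`, and `s log s ≥ s - 1` closes the
induction. When `q = 1` the battery is almost surely full.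
-/

theorem Real.one_sub_mul_log_le_log_min_add_one {c u : ℝ} (hc0 : 0 < c) (hc1 : c ≤ 1)
    (hu0 : 0 ≤ u) (hu1 : u ≤ 1) : (1 - u) * Real.log c ≤ Real.log (min (c + u) 1) := by
  have hlogc : Real.log c ≤ 0 := Real.log_nonpos hc0.le hc1
  rcases le_total (c + u) 1 with h | h
  · rw [min_eq_left h]
    -- `c + u` is the convex combination `(1 - u) • c + u • (c + 1)`
    have hconc := strictConcaveOn_log_Ioi.concaveOn.2 (Set.mem_Ioi.2 hc0)
      (Set.mem_Ioi.2 (by linarith : (0 : ℝ) < c + 1)) (by linarith : 0 ≤ 1 - u) hu0 (by ring)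
    have hlog1 : 0 ≤ Real.log (c + 1) := Real.log_nonneg (by linarith)
    simp only [smul_eq_mul] at hconc
    rw [show (1 - u) * c + u * (c + 1) = c + u by ring] at hconc
    nlinarith
  · rw [min_eq_right h, Real.log_one]
    exact mul_nonpos_of_nonneg_of_nonpos (by linarith) hlogc

theorem Real.log_one_add_add_log_le {a x : ℝ} (ha : 0 ≤ a) (hx0 : 0 < x) (hx1 : x ≤ 1) :
    Real.log (1 + a) + Real.log x ≤ Real.log (1 + a * x) := by
  rw [← Real.log_mul (by positivity) hx0.ne']
  exact Real.log_le_log (by positivity) (by nlinarith)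

noncomputable def gaussCapacity (s : ℝ) : ℝ := 1 / 2 * Real.logb 2 (1 + s)

theorem gaussCapacity_nonneg {s : ℝ} (hs : 0 ≤ s) : 0 ≤ gaussCapacity s :=
  mul_nonneg (by norm_num) (Real.logb_nonneg one_lt_two (by linarith))

theorem gaussCapacity_le_gaussCapacity {s s' : ℝ} (hs : 0 ≤ s) (h : s ≤ s') :
    gaussCapacity s ≤ gaussCapacity s' := by
  unfold gaussCapacity
  gcongr
  exact one_lt_two

theorem measurable_gaussCapacity : Measurable gaussCapacity := by
  unfold gaussCapacity Real.logb
  fun_prop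

theorem gaussCapacity_add_log_div_le {a x : ℝ} (ha : 0 ≤ a) (hx0 : 0 < x) (hx1 : x ≤ 1) :
    gaussCapacity a + Real.log x / (2 * Real.log 2) ≤ gaussCapacity (a * x) := by
  have hlog2 : 0 < Real.log 2 := Real.log_pos one_lt_two
  unfold gaussCapacity Real.logb
  rw [show 1 / 2 * (Real.log (1 + a) / Real.log 2) + Real.log x / (2 * Real.log 2)
      = (Real.log (1 + a) + Real.log x) / (2 * Real.log 2) by ring,
    show 1 / 2 * (Real.log (1 + a * x) / Real.log 2) = Real.log (1 + a * x) / (2 * Real.log 2)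
      by ring]
  gcongr
  exact Real.log_one_add_add_log_le ha hx0 hx1

section Integral

variable {Ω : Type*} [MeasurableSpace Ω] {P : Measure Ω} [IsProbabilityMeasure P] {a : ℝ}
  {x : Ω → ℝ}

theorem integral_gaussCapacity_mul_le (ha : 0 ≤ a) (hx : ∀ ω, 0 ≤ x ω ∧ x ω ≤ 1) :
    ∫ ω, gaussCapacity (a * x ω) ∂P ≤ gaussCapacity a := by
  calc ∫ ω, gaussCapacity (a * x ω) ∂P ≤ ∫ _, gaussCapacity a ∂P :=
        integral_mono_of_nonneg (ae_of_all _ fun ω => gaussCapacity_nonneg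
          (mul_nonneg ha (hx ω).1)) (integrable_const _) (ae_of_all _ fun ω =>
          gaussCapacity_le_gaussCapacity (mul_nonneg ha (hx ω).1)
            (mul_le_of_le_one_right ha (hx ω).2))
    _ = gaussCapacity a := by simp

theorem gaussCapacity_add_integral_log_div_le (ha : 0 ≤ a) (hxm : Measurable x)
    (hx : ∀ ω, 0 < x ω ∧ x ω ≤ 1) (hlog : Integrable (fun ω => Real.log (x ω)) P) :
    gaussCapacity a + (∫ ω, Real.log (x ω) ∂P) / (2 * Real.log 2)
      ≤ ∫ ω, gaussCapacity (a * x ω) ∂P := by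
  have hcap : Integrable (fun ω => gaussCapacity (a * x ω)) P := by
    refine .of_bound (measurable_gaussCapacity.comp (hxm.const_mul a)).aestronglyMeasurable
      (gaussCapacity a) (ae_of_all _ fun ω => ?_)
    have hax : 0 ≤ a * x ω := mul_nonneg ha (hx ω).1.le
    rw [Real.norm_of_nonneg (gaussCapacity_nonneg hax)]
    exact gaussCapacity_le_gaussCapacity hax (mul_le_of_le_one_right ha (hx ω).2)
  calc gaussCapacity a + (∫ ω, Real.log (x ω) ∂P) / (2 * Real.log 2)
      = ∫ ω, (gaussCapacity a + Real.log (x ω) / (2 * Real.log 2)) ∂P := by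
        rw [integral_add (integrable_const _) (hlog.div_const _), integral_const, integral_div]
        simp
    _ ≤ ∫ ω, gaussCapacity (a * x ω) ∂P :=
        integral_mono ((integrable_const _).add (hlog.div_const _)) hcap
          fun ω => gaussCapacity_add_log_div_le ha (hx ω).1 (hx ω).2

end Integral

theorem le_liminf_average_of_forall_le {a c : ℝ} {s : ℕ → ℝ}
    (h : ∀ t, 1 ≤ t → s t ∈ Set.Icc a c) :
    a ≤ liminf (fun n : ℕ => (1 / (n : ℝ)) * ∑ t ∈ Icc 1 n, s t) atTop := by
  have havg : ∀ n : ℕ, 1 ≤ n →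
      a ≤ (1 / (n : ℝ)) * ∑ t ∈ Icc 1 n, s t ∧ (1 / (n : ℝ)) * ∑ t ∈ Icc 1 n, s t ≤ c := by
    intro n hn
    have hn' : (0 : ℝ) < n := by exact_mod_cast hn
    have hlo := card_nsmul_le_sum (Icc 1 n) s a fun t ht => (h t (mem_Icc.1 ht).1).1
    have hhi := sum_le_card_nsmul (Icc 1 n) s c fun t ht => (h t (mem_Icc.1 ht).1).2
    simp only [Nat.card_Icc, add_tsub_cancel_right, nsmul_eq_mul] at hlo hhi
    rw [one_div, ← div_eq_inv_mul, le_div_iff₀ hn', div_le_iff₀ hn']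
    constructor <;> linarith
  refine le_liminf_of_le (isCoboundedUnder_ge_of_eventually_le atTop (x := c) ?_) ?_ <;>
    filter_upwards [eventually_ge_atTop 1] with n hn
  exacts [(havg n hn).2, (havg n hn).1]

structure IsNormalizedBattery {Ω : Type*} (q : ℝ) (u x : ℕ → Ω → ℝ) : Prop where
  one : ∀ ω, x 1 ω = 1
  succ : ∀ t, 1 ≤ t → ∀ ω, x (t + 1) ω = min ((1 - q) * x t ω + u (t + 1) ω) 1

namespace IsNormalizedBattery

variable {Ω : Type*} {q : ℝ} {u x : ℕ → Ω → ℝ}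

theorem le_one (hx : IsNormalizedBattery q u x) {t : ℕ} (ht : 1 ≤ t) (ω : Ω) : x t ω ≤ 1 := by
  obtain ⟨s, rfl⟩ := Nat.exists_eq_add_of_le' ht
  rcases s with _ | s
  · exact (hx.one ω).le
  · exact (hx.succ (s + 1) (by omega) ω).trans_le (min_le_right _ _)

theorem pow_le (hx : IsNormalizedBattery q u x) (hq0 : 0 ≤ q) (hq1 : q ≤ 1)
    (hu : ∀ t ω, 0 ≤ u t ω) {t : ℕ} (ht : 1 ≤ t) (ω : Ω) : (1 - q) ^ (t - 1) ≤ x t ω := by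
  induction t, ht using Nat.le_induction with
  | base => simp [hx.one ω]
  | succ t ht ih =>
    have hpow : (1 - q) ^ (t + 1 - 1) = (1 - q) * (1 - q) ^ (t - 1) := by
      rw [← pow_succ', Nat.sub_add_cancel ht, Nat.add_sub_cancel]
    rw [hx.succ t ht ω]
    refine le_min ?_ (pow_le_one₀ (by linarith) (by linarith))
    rw [hpow]
    nlinarith [hu (t + 1) ω]

theorem one_sub_mul_log_le_log_succ (hx : IsNormalizedBattery q u x)
    (hu01 : ∀ t ω, 0 ≤ u t ω ∧ u t ω ≤ 1) (hq0 : 0 ≤ q) (hq1 : q < 1) {t : ℕ} (ht : 1 ≤ t)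
    (ω : Ω) :
    (1 - u (t + 1) ω) * (Real.log (1 - q) + Real.log (x t ω)) ≤ Real.log (x (t + 1) ω) := by
  have hpos : 0 < x t ω :=
    (pow_pos (by linarith) _).trans_le (hx.pow_le hq0 hq1.le (fun t ω => (hu01 t ω).1) ht ω)
  rw [← Real.log_mul (by linarith) hpos.ne', hx.succ t ht ω]
  exact Real.one_sub_mul_log_le_log_min_add_one (mul_pos (by linarith) hpos)
    (mul_le_one₀ (by linarith) hpos.le (hx.le_one ht ω)) (hu01 _ ω).1 (hu01 _ ω).2

theorem measurable_iSup_comap (hx : IsNormalizedBattery q u x) {t : ℕ} (ht : 1 ≤ t) :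
    Measurable[⨆ i ∈ Set.Iic t, MeasurableSpace.comap (u i) inferInstance] (x t) := by
  induction t, ht using Nat.le_induction with
  | base =>
    rw [show x 1 = fun _ => 1 from funext hx.one]
    exact measurable_const
  | succ t ht ih =>
    rw [show x (t + 1) = fun ω => min ((1 - q) * x t ω + u (t + 1) ω) 1 from
      funext (hx.succ t ht)]
    have hx_le := ih.mono (biSup_mono fun i hi => le_trans hi t.le_succ) le_rfl
    have hu_le := (comap_measurable (u (t + 1))).mono
      (le_biSup (fun i => MeasurableSpace.comap (u i) inferInstance) (Set.mem_Iic.2 le_rfl))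
      le_rfl
    exact ((hx_le.const_mul _).add hu_le).min measurable_const

variable [MeasurableSpace Ω] {P : Measure Ω}

theorem measurable (hx : IsNormalizedBattery q u x) (hu : ∀ t, Measurable (u t)) {t : ℕ}
    (ht : 1 ≤ t) : Measurable (x t) :=
  (hx.measurable_iSup_comap ht).mono (iSup₂_le fun i _ => (hu i).comap_le) le_rfl

theorem indepFun (hx : IsNormalizedBattery q u x) (hu : ∀ t, Measurable (u t))
    (hindep : iIndepFun u P) {t : ℕ} (ht : 1 ≤ t) : IndepFun (u (t + 1)) (x t) P := by
  have hsplit := indep_iSup_of_disjoint (fun i => (hu i).comap_le)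
    ((iIndepFun_iff_iIndep _ _ _).1 hindep) (S := {t + 1}) (T := Set.Iic t) (by simp)
  rw [IndepFun_iff_Indep]
  exact indep_of_indep_of_le hsplit
    (le_biSup (fun i => MeasurableSpace.comap (u i) inferInstance) (Set.mem_singleton (t + 1)))
    (hx.measurable_iSup_comap ht).comap_le

theorem integrable_log [IsFiniteMeasure P] (hx : IsNormalizedBattery q u x)
    (hu : ∀ t, Measurable (u t)) (hu0 : ∀ t ω, 0 ≤ u t ω) (hq0 : 0 ≤ q) (hq1 : q < 1) {t : ℕ}
    (ht : 1 ≤ t) : Integrable (fun ω => Real.log (x t ω)) P := by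
  refine .of_bound (hx.measurable hu ht).log.aestronglyMeasurable
    (-(((t - 1 : ℕ) : ℝ) * Real.log (1 - q))) (ae_of_all _ fun ω => ?_)
  have hpow := hx.pow_le hq0 hq1.le hu0 ht ω
  have hpos : 0 < x t ω := (pow_pos (by linarith) _).trans_le hpow
  rw [Real.norm_eq_abs, abs_of_nonpos (Real.log_nonpos hpos.le (hx.le_one ht ω)), neg_le_neg_iff,
    ← Real.log_pow]
  exact Real.log_le_log (pow_pos (by linarith) _) hpow

theorem neg_one_le_integral_log [IsProbabilityMeasure P] (hx : IsNormalizedBattery q u x)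
    (hu : ∀ t, Measurable (u t)) (hindep : iIndepFun u P) (hu01 : ∀ t ω, 0 ≤ u t ω ∧ u t ω ≤ 1)
    (hmean : ∀ t, ∫ ω, u t ω ∂P = q) (hq0 : 0 ≤ q) (hq1 : q < 1) {t : ℕ} (ht : 1 ≤ t) :
    -1 ≤ ∫ ω, Real.log (x t ω) ∂P := by
  have hu0 : ∀ t ω, 0 ≤ u t ω := fun t ω => (hu01 t ω).1
  induction t, ht using Nat.le_induction with
  | base => simp [hx.one]
  | succ t ht ih =>
    have hfactors : IndepFun (fun ω => 1 - u (t + 1) ω)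
        (fun ω => Real.log (1 - q) + Real.log (x t ω)) P :=
      (hx.indepFun hu hindep ht).comp (measurable_const.sub measurable_id)
        (measurable_const.add Real.measurable_log)
    have hu_int : Integrable (u (t + 1)) P := .of_bound (hu _).aestronglyMeasurable 1
      (ae_of_all _ fun ω => by rw [Real.norm_of_nonneg (hu0 _ ω)]; exact (hu01 _ ω).2)
    have hfst : Integrable (fun ω => 1 - u (t + 1) ω) P := (integrable_const 1).sub hu_int
    have hlog : Integrable (fun ω => Real.log (x t ω)) P := hx.integrable_log hu hu0 hq0 hq1 ht
    have hsnd : Integrable (fun ω => Real.log (1 - q) + Real.log (x t ω)) P :=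
      (integrable_const _).add hlog
    have hmul : ∫ ω, (1 - u (t + 1) ω) * (Real.log (1 - q) + Real.log (x t ω)) ∂P
        = (1 - q) * (Real.log (1 - q) + ∫ ω, Real.log (x t ω) ∂P) := by
      rw [hfactors.integral_fun_mul_eq_mul_integral hfst.aestronglyMeasurable
        hsnd.aestronglyMeasurable, integral_sub (integrable_const 1) hu_int,
        integral_add (integrable_const _) hlog, hmean]
      simp
    have hstep : ∫ ω, (1 - u (t + 1) ω) * (Real.log (1 - q) + Real.log (x t ω)) ∂P
        ≤ ∫ ω, Real.log (x (t + 1) ω) ∂P := integral_mono (hfactors.integrable_mul hfst hsnd)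
      (hx.integrable_log hu hu0 hq0 hq1 (by omega : 1 ≤ t + 1))
      (hx.one_sub_mul_log_le_log_succ hu01 hq0 hq1 ht)
    have hslog := Real.self_sub_one_le_mul_log (by linarith : 0 ≤ 1 - q)
    rw [hmul] at hstep
    nlinarith [mul_le_mul_of_nonneg_left ih (by linarith : 0 ≤ 1 - q)]

theorem ae_eq_one (hx : IsNormalizedBattery 1 u x) (hu : ∀ t, u t =ᵐ[P] 1) {t : ℕ}
    (ht : 1 ≤ t) : x t =ᵐ[P] 1 := by
  induction t, ht using Nat.le_induction with
  | base => exact ae_of_all _ hx.one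
  | succ t ht ih =>
    filter_upwards [hu (t + 1)] with ω hω
    simp [hx.succ t ht ω, hω]

theorem integral_gaussCapacity_mem_Icc [IsProbabilityMeasure P] (hx : IsNormalizedBattery q u x)
    (hu : ∀ t, Measurable (u t)) (hindep : iIndepFun u P) (hu01 : ∀ t ω, 0 ≤ u t ω ∧ u t ω ≤ 1)
    (hmean : ∀ t, ∫ ω, u t ω ∂P = q) {a : ℝ} (ha : 0 ≤ a) {t : ℕ} (ht : 1 ≤ t) :
    ∫ ω, gaussCapacity (a * x t ω) ∂P ∈
      Set.Icc (gaussCapacity a - 1 / (2 * Real.log 2)) (gaussCapacity a) := by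
  have hu0 : ∀ t ω, 0 ≤ u t ω := fun t ω => (hu01 t ω).1
  have hu_int : ∀ t, Integrable (u t) P := fun t => .of_bound (hu t).aestronglyMeasurable 1
    (ae_of_all _ fun ω => by rw [Real.norm_of_nonneg (hu0 t ω)]; exact (hu01 t ω).2)
  have hq0 : 0 ≤ q := hmean 0 ▸ integral_nonneg (hu0 0)
  have hq1 : q ≤ 1 := hmean 0 ▸
    (integral_mono (hu_int 0) (integrable_const 1) fun ω => (hu01 0 ω).2).trans_eq (by simp)
  rcases hq1.lt_or_eq with hq1 | rfl
  · have hx01 : ∀ ω, 0 < x t ω ∧ x t ω ≤ 1 := fun ω =>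
      ⟨(pow_pos (by linarith) _).trans_le (hx.pow_le hq0 hq1.le hu0 ht ω), hx.le_one ht ω⟩
    refine ⟨?_, integral_gaussCapacity_mul_le ha fun ω => ⟨(hx01 ω).1.le, (hx01 ω).2⟩⟩
    calc gaussCapacity a - 1 / (2 * Real.log 2)
        ≤ gaussCapacity a + (∫ ω, Real.log (x t ω) ∂P) / (2 * Real.log 2) := by
          rw [sub_eq_add_neg, ← neg_div]
          gcongr
          exact hx.neg_one_le_integral_log hu hindep hu01 hmean hq0 hq1 ht
      _ ≤ _ := gaussCapacity_add_integral_log_div_le ha (hx.measurable hu ht) hx01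
          (hx.integrable_log hu hu0 hq0 hq1 ht)
  · have hu1 : ∀ t, u t =ᵐ[P] 1 := fun t => (integral_eq_iff_of_ae_le (hu_int t)
      (integrable_const 1) (ae_of_all _ fun ω => (hu01 t ω).2)).1 (by simp [hmean])
    have hcap : ∫ ω, gaussCapacity (a * x t ω) ∂P = gaussCapacity a := by
      rw [integral_congr_ae (g := fun _ => gaussCapacity a)
        ((hx.ae_eq_one hu1 ht).mono fun ω hω => by simp [hω])]
      simp
    rw [hcap]
    exact ⟨sub_le_self _ (by positivity), le_rfl⟩

end IsNormalizedBattery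

/-- **Additive near-optimality of the Fixed Fraction Policy.** For i.i.d. nonnegative
arrivals `E`, battery capacity `B > 0`, SNR `γ > 0`, `μ = 𝔼[min (E 1) B] > 0`,
`q = μ / B`, battery `b 1 = B`, `b (t+1) = min ((1-q) b t + min (E (t+1)) B) B`, and
the Fixed Fraction Policy `g t = q * b t`, the long-term average throughput satisfies
`liminf_n (1/n) ∑_{t=1}^n 𝔼[½ log₂(1 + γ g t)] ≥ ½ log₂(1 + γ μ) - 1/(2 ln 2)`. -/
theorem stmt_11 {Ω : Type*} [MeasurableSpace Ω] (P : Measure Ω) [IsProbabilityMeasure P]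
    (B γ : ℝ) (hB : 0 < B) (hγ : 0 < γ)
    (E : ℕ → Ω → ℝ) (hEmeas : ∀ t, Measurable (E t))
    (hEnn : ∀ t ω, 0 ≤ E t ω)
    (hindep : iIndepFun E P)
    (hident : ∀ t, IdentDistrib (E t) (E 1) P P)
    (μ q : ℝ) (hμ : μ = ∫ ω, min (E 1 ω) B ∂P) (hμpos : 0 < μ) (hq : q = μ / B)
    (b g : ℕ → Ω → ℝ)
    (hb1 : ∀ ω, b 1 ω = B)
    (hbrec : ∀ t, 1 ≤ t → ∀ ω,
      b (t + 1) ω = min ((1 - q) * b t ω + min (E (t + 1) ω) B) B)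
    (hg : ∀ t, 1 ≤ t → ∀ ω, g t ω = q * b t ω) :
    (1 / 2) * Real.logb 2 (1 + γ * μ) - 1 / (2 * Real.log 2)
      ≤ liminf (fun n : ℕ => (1 / (n : ℝ)) * ∑ t ∈ Finset.Icc 1 n,
          ∫ ω, (1 / 2) * Real.logb 2 (1 + γ * g t ω) ∂P) atTop := by
  have hclip : Measurable fun y : ℝ => min y B / B :=
    (measurable_id.min measurable_const).div_const B
  have hx : IsNormalizedBattery q (fun t ω => min (E t ω) B / B) (fun t ω => b t ω / B) :=
    ⟨fun ω => by simp [hb1, hB.ne'], fun t ht ω => by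
      rw [hbrec t ht ω, ← min_div_div_right hB.le, div_self hB.ne', add_div, mul_div_assoc]⟩
  have hu01 : ∀ t ω, 0 ≤ min (E t ω) B / B ∧ min (E t ω) B / B ≤ 1 := fun t ω =>
    ⟨div_nonneg (le_min (hEnn t ω) hB.le) hB.le, div_le_one_of_le₀ (min_le_right _ _) hB.le⟩
  have hmean : ∀ t, ∫ ω, min (E t ω) B / B ∂P = q := fun t => by
    rw [hq, hμ, ← integral_div]
    exact ((hident t).comp hclip).integral_eq
  have hthroughput : ∀ t, 1 ≤ t → ∫ ω, (1 / 2) * Real.logb 2 (1 + γ * g t ω) ∂P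
      = ∫ ω, gaussCapacity (γ * μ * (b t ω / B)) ∂P := fun t ht => by
    refine integral_congr_ae (ae_of_all _ fun ω => ?_)
    simp only [gaussCapacity, hg t ht ω, hq]
    ring_nf
  refine le_liminf_average_of_forall_le (c := gaussCapacity (γ * μ)) fun t ht => ?_
  rw [hthroughput t ht]
  exact hx.integral_gaussCapacity_mem_Icc (fun t => hclip.comp (hEmeas t))
    (hindep.comp _ fun _ => hclip) hu01 hmean (by positivity) ht
end

section
/- Let (E_t)_{t≥1} be i.i.d. nonnegative random variables, B̄ > 0, γ > 0, μ = E[min{E_1, B̄}] > 0, and q = μ/B̄. Define the battery process b_1 = B̄, b_{t+1} = min{(1−q)·b_t + min{E_{t+1}, B̄}, B̄}, and the fixed fraction policy g_t = q·b_t. Then liminf_{n→∞} (1/n)∑_{t=1}^n E[½·log₂(1 + γ·g_t)] ≥ (1/2)·½·log₂(1 + γ·μ). -/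
open MeasureTheory ProbabilityTheory Filter Finset

/-!
Write `Y t = min (E t) B`. For `b, y ∈ [0, B]` the clipping loses at most `b y / B`, i.e.
`min ((1 - q) b + y) B ≥ (1 - q) b + y - b y / B`. Since `b t` depends only on the arrivals up to
time `t`, it is independent of `Y (t + 1)`, and taking expectations gives
`𝔼 b (t + 1) ≥ (1 - 2q) 𝔼 b t + q B`, whose fixed point is `B / 2`; hence `𝔼 b t ≥ B / 2`
(when `q ≥ 1/2`, directly from `b (t + 1) ≥ Y (t + 1)`). Concavity of the logarithm gives
`log (1 + γ q b) ≥ (b / B) log (1 + γ μ)`, so every throughput term is at least half of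
`½ log₂ (1 + γ μ)`, and so is the liminf of their averages.
-/

theorem Real.mul_logb_one_add_le_logb_one_add_mul_s12 {a x θ : ℝ} (ha : 1 < a) (hx : 0 ≤ x)
    (hθ₀ : 0 ≤ θ) (hθ₁ : θ ≤ 1) : θ * Real.logb a (1 + x) ≤ Real.logb a (1 + θ * x) := by
  have hlog : θ * Real.log (1 + x) ≤ Real.log (1 + θ * x) := by
    have h := strictConcaveOn_log_Ioi.concaveOn.2 (Set.mem_Ioi.2 one_pos)
      (Set.mem_Ioi.2 (by linarith : (0 : ℝ) < 1 + x)) (sub_nonneg.2 hθ₁) hθ₀ (sub_add_cancel 1 θ)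
    simp only [smul_eq_mul, Real.log_one, mul_zero, zero_add] at h
    rwa [show (1 - θ) * 1 + θ * (1 + x) = 1 + θ * x by ring] at h
  rw [Real.logb, Real.logb, ← mul_div_assoc]
  exact div_le_div_of_nonneg_right hlog (Real.log_nonneg ha.le)

theorem add_sub_mul_div_le_min {a b y B : ℝ} (hB : 0 < B) (hab : a ≤ b) (hb₀ : 0 ≤ b)
    (hbB : b ≤ B) (hy₀ : 0 ≤ y) (hyB : y ≤ B) : a + y - b * y / B ≤ min (a + y) B := by
  refine le_min (by linarith [show 0 ≤ b * y / B by positivity]) ?_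
  have hgap : b + y - b * y / B = B - (B - b) * (B - y) / B := by field_simp; ring
  have : 0 ≤ (B - b) * (B - y) / B := div_nonneg (mul_nonneg (by linarith) (by linarith)) hB.le
  linarith

theorem le_liminf_average_of_le {a : ℕ → ℝ} {c M : ℝ} (hc : ∀ t, 1 ≤ t → c ≤ a t)
    (hM : ∀ t, 1 ≤ t → a t ≤ M) :
    c ≤ liminf (fun n : ℕ => (1 / (n : ℝ)) * ∑ t ∈ Icc 1 n, a t) atTop := by
  have havg : ∀ n : ℕ, 1 ≤ n → (1 / (n : ℝ)) * ∑ t ∈ Icc 1 n, a t ∈ Set.Icc c M := by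
    intro n hn
    have hn' : (0 : ℝ) < n := by exact_mod_cast hn
    rw [one_div_mul_eq_div, Set.mem_Icc, le_div_iff₀ hn', div_le_iff₀ hn']
    constructor
    · simpa [mul_comm] using card_nsmul_le_sum (Icc 1 n) a c fun t ht => hc t (mem_Icc.1 ht).1
    · simpa [mul_comm] using sum_le_card_nsmul (Icc 1 n) a M fun t ht => hM t (mem_Icc.1 ht).1
  refine le_liminf_of_le (isCoboundedUnder_ge_of_eventually_le atTop (x := M) ?_) ?_ <;>
    filter_upwards [eventually_ge_atTop 1] with n hn
  exacts [(havg n hn).2, (havg n hn).1]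

theorem ProbabilityTheory.iIndepFun.indepFun_of_measurable_iSup {Ω ι β γ : Type*}
    [MeasurableSpace Ω] [MeasurableSpace β] [MeasurableSpace γ] {P : Measure Ω}
    {Y : ι → Ω → γ} (hY : ∀ i, Measurable (Y i)) (hindep : iIndepFun Y P) {s : Set ι} {j : ι}
    (hj : j ∉ s) {X : Ω → β} (hX : Measurable[⨆ i ∈ s, MeasurableSpace.comap (Y i) ‹_›] X) :
    IndepFun X (Y j) P := by
  have h := indep_iSup_of_disjoint (fun i => (hY i).comap_le) hindep.iIndep
    (Set.disjoint_singleton_right.2 hj)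
  rw [IndepFun_iff_Indep]
  refine indep_of_indep_of_le_right (indep_of_indep_of_le_left h hX.comap_le) ?_
  exact le_iSup₂ (f := fun i (_ : i ∈ ({j} : Set ι)) => MeasurableSpace.comap (Y i) ‹_›) j rfl

section Battery

variable {Ω : Type*}

structure IsFixedFractionBattery (B q : ℝ) (Y b : ℕ → Ω → ℝ) : Prop where
  init : ∀ ω, b 1 ω = B
  succ : ∀ t, 1 ≤ t → ∀ ω, b (t + 1) ω = min ((1 - q) * b t ω + Y (t + 1) ω) B

namespace IsFixedFractionBattery

variable {B q : ℝ} {Y b : ℕ → Ω → ℝ}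

theorem mem_Icc (hb : IsFixedFractionBattery B q Y b) (hB : 0 ≤ B) (hq : q ≤ 1)
    (hY : ∀ t ω, 0 ≤ Y t ω) {t : ℕ} (ht : 1 ≤ t) (ω : Ω) : b t ω ∈ Set.Icc 0 B := by
  induction t, ht using Nat.le_induction with
  | base => simp [hb.init, hB]
  | succ t ht ih =>
    rw [hb.succ t ht]
    exact ⟨le_min (add_nonneg (mul_nonneg (sub_nonneg.2 hq) ih.1) (hY _ ω)) hB, min_le_right _ _⟩

theorem measurable_iSup_comap [MeasurableSpace Ω] (hb : IsFixedFractionBattery B q Y b) {t : ℕ}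
    (ht : 1 ≤ t) :
    Measurable[⨆ i ∈ Set.Iic t, MeasurableSpace.comap (Y i) inferInstance] (b t) := by
  induction t, ht using Nat.le_induction with
  | base =>
    rw [funext hb.init]
    exact measurable_const
  | succ t ht ih =>
    rw [funext (hb.succ t ht)]
    have hpast := ih.mono (biSup_mono fun i (hi : i ≤ t) => hi.trans t.le_succ) le_rfl
    have hnew : Measurable[⨆ i ∈ Set.Iic (t + 1), MeasurableSpace.comap (Y i) inferInstance]
        (Y (t + 1)) := comap_measurable _ |>.mono (le_iSup₂ (f := fun i (_ : i ∈ Set.Iic (t + 1)) =>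
        MeasurableSpace.comap (Y i) inferInstance) (t + 1) (le_refl (t + 1))) le_rfl
    exact ((hpast.const_mul _).add hnew).min measurable_const

variable [MeasurableSpace Ω]

theorem measurable (hb : IsFixedFractionBattery B q Y b) (hYm : ∀ t, Measurable (Y t)) {t : ℕ}
    (ht : 1 ≤ t) : Measurable (b t) :=
  (hb.measurable_iSup_comap ht).mono (iSup₂_le fun i _ => (hYm i).comap_le) le_rfl

variable {P : Measure Ω} [IsProbabilityMeasure P]

theorem integrable (hb : IsFixedFractionBattery B q Y b) (hB : 0 ≤ B) (hq : q ≤ 1)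
    (hYm : ∀ t, Measurable (Y t)) (hY : ∀ t ω, 0 ≤ Y t ω) {t : ℕ} (ht : 1 ≤ t) :
    Integrable (b t) P :=
  .of_mem_Icc 0 B (hb.measurable hYm ht).aemeasurable (ae_of_all _ (hb.mem_Icc hB hq hY ht))

theorem integral_succ_ge (hb : IsFixedFractionBattery B q Y b) (hB : 0 < B) (hq₀ : 0 ≤ q)
    (hq₁ : q ≤ 1) (hYm : ∀ t, Measurable (Y t)) (hY : ∀ t ω, Y t ω ∈ Set.Icc 0 B)
    (hindep : iIndepFun Y P) (hYint : ∀ t, ∫ ω, Y t ω ∂P = q * B) {t : ℕ} (ht : 1 ≤ t) :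
    (1 - 2 * q) * ∫ ω, b t ω ∂P + q * B ≤ ∫ ω, b (t + 1) ω ∂P := by
  have hY₀ t ω : 0 ≤ Y t ω := (hY t ω).1
  have hbt := hb.mem_Icc hB.le hq₁ hY₀ ht
  have hbI := hb.integrable (P := P) hB.le hq₁ hYm hY₀ ht
  have hYI : Integrable (Y (t + 1)) P :=
    .of_mem_Icc 0 B (hYm _).aemeasurable (ae_of_all _ (hY _))
  have hbYI : Integrable (fun ω => b t ω * Y (t + 1) ω / B) P :=
    (hbI.mul_bdd (c := B) hYI.aestronglyMeasurable
      (ae_of_all _ fun ω => abs_le.2 ⟨by linarith [hY₀ (t + 1) ω], (hY _ ω).2⟩)).div_const B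
  have hindep_bY : IndepFun (b t) (Y (t + 1)) P :=
    hindep.indepFun_of_measurable_iSup hYm (by simp) (hb.measurable_iSup_comap ht)
  have hpath : ∀ ω, (1 - q) * b t ω + Y (t + 1) ω - b t ω * Y (t + 1) ω / B ≤ b (t + 1) ω :=
    fun ω => hb.succ t ht ω ▸ add_sub_mul_div_le_min hB
      (by nlinarith [(hbt ω).1]) (hbt ω).1 (hbt ω).2 (hY _ ω).1 (hY _ ω).2
  have hlinI : Integrable (fun ω => (1 - q) * b t ω + Y (t + 1) ω) P := (hbI.const_mul _).add hYI
  have hmean : ∫ ω, ((1 - q) * b t ω + Y (t + 1) ω - b t ω * Y (t + 1) ω / B) ∂P ≤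
      ∫ ω, b (t + 1) ω ∂P := integral_mono (hlinI.sub hbYI)
    (hb.integrable hB.le hq₁ hYm hY₀ (ht.trans t.le_succ)) hpath
  rw [integral_sub hlinI hbYI, integral_add (hbI.const_mul _) hYI,
    integral_const_mul, integral_div, hindep_bY.integral_fun_mul_eq_mul_integral
      hbI.aestronglyMeasurable hYI.aestronglyMeasurable, hYint] at hmean
  calc (1 - 2 * q) * ∫ ω, b t ω ∂P + q * B
      = (1 - q) * ∫ ω, b t ω ∂P + q * B - (∫ ω, b t ω ∂P) * (q * B) / B := by
        field_simp; ring
    _ ≤ _ := hmean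

theorem half_le_integral (hb : IsFixedFractionBattery B q Y b) (hB : 0 < B) (hq₀ : 0 ≤ q)
    (hq₁ : q ≤ 1) (hYm : ∀ t, Measurable (Y t)) (hY : ∀ t ω, Y t ω ∈ Set.Icc 0 B)
    (hindep : iIndepFun Y P) (hYint : ∀ t, ∫ ω, Y t ω ∂P = q * B) {t : ℕ} (ht : 1 ≤ t) :
    B / 2 ≤ ∫ ω, b t ω ∂P := by
  have hinit : ∫ ω, b 1 ω ∂P = B := by simp [hb.init]
  rcases le_total q (1 / 2) with hq | hq
  · induction t, ht using Nat.le_induction with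
    | base => linarith
    | succ t ht ih =>
      have hstep := hb.integral_succ_ge hB hq₀ hq₁ hYm hY hindep hYint ht
      nlinarith [mul_le_mul_of_nonneg_left ih (by linarith : (0 : ℝ) ≤ 1 - 2 * q)]
  · induction t, ht using Nat.le_induction with
    | base => linarith
    | succ s hs _ =>
      -- for `q ≥ 1/2` the battery holds at least the last arrival, whose mean is `q B`
      have hY₀ t ω : 0 ≤ Y t ω := (hY t ω).1
      have harrival ω : Y (s + 1) ω ≤ b (s + 1) ω := by
        rw [hb.succ s hs]
        exact le_min (le_add_of_nonneg_left (mul_nonneg (by linarith)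
          (hb.mem_Icc hB.le hq₁ hY₀ hs ω).1)) (hY _ ω).2
      calc B / 2 ≤ q * B := by nlinarith
        _ = ∫ ω, Y (s + 1) ω ∂P := (hYint _).symm
        _ ≤ ∫ ω, b (s + 1) ω ∂P := integral_mono
          (.of_mem_Icc 0 B (hYm _).aemeasurable (ae_of_all _ (hY _)))
          (hb.integrable hB.le hq₁ hYm hY₀ (by omega)) harrival

end IsFixedFractionBattery

end Battery

theorem integral_logb_one_add_mul_mem_Icc {Ω : Type*} [MeasurableSpace Ω] {P : Measure Ω}
    [IsProbabilityMeasure P] {X : Ω → ℝ} {a s B : ℝ} (ha : 1 < a) (hs : 0 ≤ s) (hB : 0 < B)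
    (hXm : Measurable X) (hX : ∀ ω, X ω ∈ Set.Icc 0 B) (hmean : B / 2 ≤ ∫ ω, X ω ∂P) :
    ∫ ω, Real.logb a (1 + s * X ω) ∂P ∈
      Set.Icc (Real.logb a (1 + s * B) / 2) (Real.logb a (1 + s * B)) := by
  set L := Real.logb a (1 + s * B)
  have hL : 0 ≤ L := Real.logb_nonneg ha (by nlinarith)
  have hbound ω : Real.logb a (1 + s * X ω) ∈ Set.Icc (X ω / B * L) L := by
    obtain ⟨hX₀, hXB⟩ := hX ω
    constructor
    · have h := Real.mul_logb_one_add_le_logb_one_add_mul_s12 ha (mul_nonneg hs hB.le)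
        (div_nonneg hX₀ hB.le) ((div_le_one hB).2 hXB)
      rwa [show X ω / B * (s * B) = s * X ω by field_simp] at h
    · exact Real.logb_le_logb_of_le ha (by nlinarith) (by nlinarith)
  have hXI : Integrable X P := .of_mem_Icc 0 B hXm.aemeasurable (ae_of_all _ hX)
  have hlogI : Integrable (fun ω => Real.logb a (1 + s * X ω)) P :=
    .of_mem_Icc 0 L (show AEMeasurable (fun ω => Real.log (1 + s * X ω) / Real.log a) P by fun_prop)
      (ae_of_all _ fun ω =>
        ⟨(mul_nonneg (div_nonneg (hX ω).1 hB.le) hL).trans (hbound ω).1, (hbound ω).2⟩)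
  constructor
  · calc L / 2 = B / 2 / B * L := by field_simp
      _ ≤ (∫ ω, X ω ∂P) / B * L := by gcongr
      _ = ∫ ω, X ω / B * L ∂P := by rw [integral_mul_const, integral_div]
      _ ≤ _ := integral_mono ((hXI.div_const B).mul_const L) hlogI fun ω => (hbound ω).1
  · calc _ ≤ ∫ _, L ∂P := integral_mono hlogI (integrable_const L) fun ω => (hbound ω).2
      _ = L := by simp

/-- **Multiplicative near-optimality of the Fixed Fraction Policy.** For i.i.d. nonnegative
arrivals `E`, battery capacity `B > 0`, SNR `γ > 0`, `μ = 𝔼[min (E 1) B] > 0`,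
`q = μ / B`, battery `b 1 = B`, `b (t+1) = min ((1-q) b t + min (E (t+1)) B) B`, and
the Fixed Fraction Policy `g t = q * b t`, the long-term average throughput satisfies
`liminf_n (1/n) ∑_{t=1}^n 𝔼[½ log₂(1 + γ g t)] ≥ (1/2) ½ log₂(1 + γ μ)`. -/
theorem stmt_12 {Ω : Type*} [MeasurableSpace Ω] (P : Measure Ω) [IsProbabilityMeasure P]
    (B γ : ℝ) (hB : 0 < B) (hγ : 0 < γ)
    (E : ℕ → Ω → ℝ) (hEmeas : ∀ t, Measurable (E t))
    (hEnn : ∀ t ω, 0 ≤ E t ω)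
    (hindep : iIndepFun E P)
    (hident : ∀ t, IdentDistrib (E t) (E 1) P P)
    (μ q : ℝ) (hμ : μ = ∫ ω, min (E 1 ω) B ∂P) (hμpos : 0 < μ) (hq : q = μ / B)
    (b g : ℕ → Ω → ℝ)
    (hb1 : ∀ ω, b 1 ω = B)
    (hbrec : ∀ t, 1 ≤ t → ∀ ω,
      b (t + 1) ω = min ((1 - q) * b t ω + min (E (t + 1) ω) B) B)
    (hg : ∀ t, 1 ≤ t → ∀ ω, g t ω = q * b t ω) :
    (1 / 2) * ((1 / 2) * Real.logb 2 (1 + γ * μ))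
      ≤ liminf (fun n : ℕ => (1 / (n : ℝ)) * ∑ t ∈ Finset.Icc 1 n,
          ∫ ω, (1 / 2) * Real.logb 2 (1 + γ * g t ω) ∂P) atTop := by
  set Y : ℕ → Ω → ℝ := fun t ω => min (E t ω) B
  have hYm t : Measurable (Y t) := (hEmeas t).min measurable_const
  have hY t ω : Y t ω ∈ Set.Icc 0 B := ⟨le_min (hEnn t ω) hB.le, min_le_right _ _⟩
  have hYindep : iIndepFun Y P :=
    hindep.comp (fun _ x => min x B) fun _ => measurable_id.min measurable_const
  have hμq : μ = q * B := by rw [hq, div_mul_cancel₀ _ hB.ne']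
  have hYint t : ∫ ω, Y t ω ∂P = q * B :=
    hμq ▸ hμ ▸ ((hident t).comp (measurable_id.min measurable_const)).integral_eq
  have hq₀ : 0 ≤ q := hq ▸ div_nonneg hμpos.le hB.le
  have hq₁ : q ≤ 1 := by
    refine (mul_le_iff_le_one_left hB).1 ((hYint 1).symm.trans_le ?_)
    calc ∫ ω, Y 1 ω ∂P ≤ ∫ _, B ∂P := integral_mono (.of_mem_Icc 0 B (hYm 1).aemeasurable
          (ae_of_all _ (hY 1))) (integrable_const B) fun ω => (hY 1 ω).2
      _ = B := by simp
  have hbat : IsFixedFractionBattery B q Y b := ⟨hb1, hbrec⟩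
  refine le_liminf_average_of_le (M := (1 / 2) * Real.logb 2 (1 + γ * μ))
    (fun t ht => ?_) (fun t ht => ?_) <;>
  · have h := integral_logb_one_add_mul_mem_Icc (P := P) (s := γ * q) one_lt_two (by positivity) hB
      (hbat.measurable hYm ht) (hbat.mem_Icc hB.le hq₁ (fun t ω => (hY t ω).1) ht)
      (hbat.half_le_integral hB hq₀ hq₁ hYm hY hYindep hYint ht)
    simp only [hg t ht, integral_const_mul, hμq, ← mul_assoc] at h ⊢
    linarith [h.1, h.2]
end

section
/- Let (E_t)_{t≥1} be i.i.d. nonnegative random variables, B̄ > 0, γ > 0, and μ = E[min{E_1, B̄}] > 0. Then the optimal long-term average throughput Θ, defined as the supremum over all admissible online policies g of liminf_{n→∞} T_n(g), satisfies ½·log₂(1 + γ·μ) − 1/(2·ln 2) ≤ Θ ≤ ½·log₂(1 + γ·μ), and also Θ ≥ (1/2)·½·log₂(1 + γ·μ). -/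
/-!
Upper bound: an admissible policy never spends more than the initial charge `B` plus the clipped
harvest `min (E t) B` of slots `2, …, n + 1`, whose expectation is `n μ`. Bounding
`log (1 + γ g)` by its tangent at `g = μ` then gives `T_n ≤ ½ log₂ (1 + γ μ) + O(1 / n)`.

Lower bound: spend the fixed fraction `q = min p (4/5)` of the battery in every slot, where
`p = μ / B`. The normalized battery `u = b / B` satisfies `u' ≥ x + (1 - x) (1 - q) u`, where
`x = min (E t) B / B` is independent of `u` and has mean `p`. Taking expectations gives
`𝔼 u_t ≥ p / (p + q - p q)`, and after the weighted AM-GM inequality `x + (1 - x) y ≥ y ^ (1 - x)`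
it gives `𝔼 (-log u_t) ≤ (1 - p) (-log (1 - q)) / p`. Since `log (1 + γ q b)` is at least
`log (1 + γ q B) + log u` and at least `u log (1 + γ q B)`, with this choice of `q` the expected
rate of every slot, hence the liminf of the averages, is at least `log (1 + γ μ) - 1` and at
least `log (1 + γ μ) / 2` nats.
-/

open MeasureTheory ProbabilityTheory Filter Finset

namespace Real

lemma mul_log_le_log_mul_add_one_sub {s y : ℝ} (hy : 0 < y) (hs0 : 0 ≤ s) (hs1 : s ≤ 1) :
    s * log y ≤ log (s * y + (1 - s)) := by
  have := strictConcaveOn_log_Ioi.concaveOn.2 (Set.mem_Ioi.2 hy) (Set.mem_Ioi.2 one_pos) hs0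
    (sub_nonneg.2 hs1) (add_sub_cancel s 1)
  simpa using this

lemma add_log_le_log_one_add_mul {c u : ℝ} (hc : 0 ≤ c) (hu0 : 0 < u) (hu1 : u ≤ 1) :
    log (1 + c) + log u ≤ log (1 + c * u) := by
  rw [← log_mul (by positivity) hu0.ne']
  exact log_le_log (by positivity) (by nlinarith)

lemma log_one_add_mul_le_tangent {γ y μ : ℝ} (hy : 0 < 1 + γ * y) (hμ : 0 < 1 + γ * μ) :
    log (1 + γ * y) ≤ log (1 + γ * μ) + γ / (1 + γ * μ) * (y - μ) := by
  have h := log_le_sub_one_of_pos (div_pos hy hμ)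
  rw [log_div hy.ne' hμ.ne'] at h
  have e : (1 + γ * y) / (1 + γ * μ) - 1 = γ / (1 + γ * μ) * (y - μ) := by
    field_simp
    ring
  linarith

lemma neg_log_le_one_sub_mul_neg_log {x y v : ℝ} (hx0 : 0 ≤ x) (hx1 : x ≤ 1) (hy : 0 < y)
    (hv : x + (1 - x) * y ≤ v) : -log v ≤ (1 - x) * -log y := by
  have h := mul_log_le_log_mul_add_one_sub hy (sub_nonneg.2 hx1) (sub_le_self 1 hx0)
  have hpos : 0 < (1 - x) * y + (1 - (1 - x)) := by
    rcases hx0.eq_or_lt with rfl | hx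
    · simpa using hy
    · nlinarith
  have := log_le_log hpos (show _ ≤ v by linarith)
  linarith

end Real

open Real

lemma add_one_sub_mul_le_min {x y : ℝ} (hx0 : 0 ≤ x) (hx1 : x ≤ 1) (hy0 : 0 ≤ y) (hy1 : y ≤ 1) :
    x + (1 - x) * y ≤ min (y + x) 1 :=
  le_min (by nlinarith) (by nlinarith)

lemma min_add_min_eq_min_add {y e B : ℝ} (hy : 0 ≤ y) : min (y + min e B) B = min (y + e) B := by
  rcases le_total e B with h | h
  · rw [min_eq_left h]
  · rw [min_eq_right h, min_eq_right (by linarith), min_eq_right (by linarith)]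

lemma min_div_mem_Icc {e B : ℝ} (hB : 0 < B) (he : 0 ≤ e) : min e B / B ∈ Set.Icc 0 1 :=
  ⟨div_nonneg (le_min he hB.le) hB.le, (div_le_one hB).2 (min_le_right _ _)⟩

lemma le_of_le_mul_add {w : ℕ → ℝ} {a b s : ℝ} (ha : 0 ≤ a) (hs : a * s + b ≤ s) (h0 : w 0 ≤ s)
    (hw : ∀ t, w (t + 1) ≤ a * w t + b) : ∀ t, w t ≤ s
  | 0 => h0
  | t + 1 => (hw t).trans <| by nlinarith [le_of_le_mul_add ha hs h0 hw t]

lemma ge_of_mul_add_le {w : ℕ → ℝ} {a b s : ℝ} (ha : 0 ≤ a) (hs : s ≤ a * s + b) (h0 : s ≤ w 0)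
    (hw : ∀ t, a * w t + b ≤ w (t + 1)) : ∀ t, s ≤ w t
  | 0 => h0
  | t + 1 => le_trans (by nlinarith [ge_of_mul_add_le ha hs h0 hw t]) (hw t)

lemma sum_add_le_add_sum_min {g b e : ℕ → ℝ} {B : ℝ} (hb1 : b 1 = B)
    (hrec : ∀ t, 1 ≤ t → b (t + 1) = min (b t - g t + e (t + 1)) B)
    (hgb : ∀ t, 1 ≤ t → g t ≤ b t) :
    ∀ n, ∑ t ∈ Icc 1 n, g t + b (n + 1) ≤ B + ∑ t ∈ Icc 2 (n + 1), min (e t) B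
  | 0 => by simp [hb1]
  | n + 1 => by
    have ih := sum_add_le_add_sum_min hb1 hrec hgb n
    have hstep : b (n + 2) ≤ b (n + 1) - g (n + 1) + min (e (n + 2)) B := by
      rw [hrec (n + 1) (by omega)]
      rcases le_total (e (n + 2)) B with h | h
      · rw [min_eq_left h]; exact min_le_left _ _
      · rw [min_eq_right h]; linarith [min_le_right (b (n + 1) - g (n + 1) + e (n + 2)) B,
          hgb (n + 1) (by omega)]
    rw [sum_Icc_succ_top (by omega), sum_Icc_succ_top (by omega)]
    linarith

lemma le_liminf_average {r : ℕ → ℝ} {m M : ℝ} (hm : ∀ t, 1 ≤ t → m ≤ r t)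
    (hM : ∀ t, 1 ≤ t → r t ≤ M) :
    m ≤ liminf (fun n : ℕ => (1 / (n : ℝ)) * ∑ t ∈ Icc 1 n, r t) atTop := by
  refine le_liminf_of_le (isCoboundedUnder_ge_of_eventually_le atTop (x := M) ?_) ?_
  all_goals refine eventually_atTop.2 ⟨1, fun n hn => ?_⟩
  all_goals have hn' : (0 : ℝ) < n := by exact_mod_cast hn
  · have := sum_le_card_nsmul (Icc 1 n) r M fun t ht => hM t (mem_Icc.1 ht).1
    rw [Nat.card_Icc, Nat.add_sub_cancel, nsmul_eq_mul] at this
    rwa [one_div, inv_mul_le_iff₀ hn']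
  · have := card_nsmul_le_sum (Icc 1 n) r m fun t ht => hm t (mem_Icc.1 ht).1
    rw [Nat.card_Icc, Nat.add_sub_cancel, nsmul_eq_mul] at this
    rwa [one_div, le_inv_mul_iff₀ hn']

lemma liminf_average_le {r : ℕ → ℝ} {L K : ℝ} (hr : ∀ t, 1 ≤ t → 0 ≤ r t)
    (hsum : ∀ n, ∑ t ∈ Icc 1 n, r t ≤ n * L + K) :
    liminf (fun n : ℕ => (1 / (n : ℝ)) * ∑ t ∈ Icc 1 n, r t) atTop ≤ L := by
  refine liminf_le_of_le (isBoundedUnder_of_eventually_ge (a := 0) (Eventually.of_forall fun n =>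
    mul_nonneg (by positivity) (sum_nonneg fun t ht => hr t (mem_Icc.1 ht).1))) fun c hc => ?_
  have hlim : Tendsto (fun n : ℕ => L + K * (1 / (n : ℝ))) atTop (nhds L) := by
    simpa using tendsto_const_nhds.add (tendsto_one_div_atTop_nhds_zero_nat.const_mul K)
  refine ge_of_tendsto hlim ?_
  filter_upwards [hc, eventually_gt_atTop 0] with n hcn hn
  have hn' : (0 : ℝ) < n := by exact_mod_cast hn
  calc c ≤ _ := hcn
    _ ≤ 1 / n * (n * L + K) := mul_le_mul_of_nonneg_left (hsum n) (by positivity)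
    _ = L + K * (1 / n) := by field_simp

lemma integrable_log_one_add_mul_s13 {Ω : Type*} [MeasurableSpace Ω] {P : Measure Ω}
    [IsFiniteMeasure P] {f : Ω → ℝ} {γ C : ℝ} (hf : Measurable f) (hγ : 0 ≤ γ)
    (h0 : ∀ ω, 0 ≤ f ω) (hC : ∀ ω, f ω ≤ C) : Integrable (fun ω => log (1 + γ * f ω)) P := by
  refine Integrable.of_bound
    (measurable_log.comp ((hf.const_mul γ).const_add 1)).aestronglyMeasurable (log (1 + γ * C))
    (ae_of_all _ fun ω => ?_)
  have hpos : 0 < 1 + γ * f ω := by nlinarith [mul_nonneg hγ (h0 ω)]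
  rw [Real.norm_eq_abs, abs_of_nonneg (log_nonneg (by nlinarith [mul_nonneg hγ (h0 ω)]))]
  exact log_le_log hpos (by nlinarith [mul_le_mul_of_nonneg_left (hC ω) hγ])

lemma integral_half_logb_two {Ω : Type*} [MeasurableSpace Ω] (P : Measure Ω) (f : Ω → ℝ) :
    ∫ ω, (1 / 2) * logb 2 (f ω) ∂P = (∫ ω, log (f ω) ∂P) / (2 * log 2) := by
  rw [← integral_div]
  congr 1 with ω
  rw [logb]
  ring

lemma integral_half_logb_one_add_mul_le {Ω : Type*} [MeasurableSpace Ω] {P : Measure Ω}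
    [IsProbabilityMeasure P] {f : Ω → ℝ} {γ C : ℝ} (hγ : 0 ≤ γ) (h0 : ∀ ω, 0 ≤ f ω)
    (hC : ∀ ω, f ω ≤ C) :
    ∫ ω, (1 / 2) * logb 2 (1 + γ * f ω) ∂P ≤ (1 / 2) * logb 2 (1 + γ * C) := by
  have hpos : ∀ ω, 1 ≤ 1 + γ * f ω := fun ω => by nlinarith [mul_nonneg hγ (h0 ω)]
  refine (integral_mono_of_nonneg (ae_of_all _ fun ω => ?_)
    (integrable_const ((1 / 2) * logb 2 (1 + γ * C))) (ae_of_all _ fun ω => ?_)).trans_eq (by simp)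
  · exact mul_nonneg (by norm_num) (logb_nonneg one_lt_two (hpos ω))
  · refine mul_le_mul_of_nonneg_left (logb_le_logb_of_le one_lt_two (by linarith [hpos ω]) ?_)
      (by norm_num)
    nlinarith [mul_le_mul_of_nonneg_left (hC ω) hγ]

/-- Abstracts the fixed-fraction policy: `u t` is the battery normalized by the capacity, `x t` the
normalized clipped arrival `min (E t) B / B`, and `a = 1 - q` the fraction of the battery kept. -/
structure IsRefillProcess {Ω : Type*} [MeasurableSpace Ω] (P : Measure Ω) (u x : ℕ → Ω → ℝ)
    (a p : ℝ) : Prop where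
  measurable_state : ∀ t, Measurable (u t)
  measurable_arrival : ∀ t, Measurable (x t)
  state_zero : ∀ ω, u 0 ω = 1
  state_le_one : ∀ t ω, u t ω ≤ 1
  arrival_mem : ∀ t ω, x t ω ∈ Set.Icc 0 1
  step : ∀ t ω, x (t + 1) ω + (1 - x (t + 1) ω) * (a * u t ω) ≤ u (t + 1) ω
  indepFun : ∀ t, IndepFun (u t) (x (t + 1)) P
  integral_arrival : ∀ t, ∫ ω, x (t + 1) ω ∂P = p

namespace IsRefillProcess

variable {Ω : Type*} [MeasurableSpace Ω] {P : Measure Ω} {u x : ℕ → Ω → ℝ} {a p : ℝ}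

lemma pow_le (h : IsRefillProcess P u x a p) (ha0 : 0 ≤ a) (ha1 : a ≤ 1) (ω : Ω) :
    ∀ t, a ^ t ≤ u t ω
  | 0 => by simp [h.state_zero ω]
  | t + 1 => by
    obtain ⟨hx0, hx1⟩ := h.arrival_mem (t + 1) ω
    have hau : a * u t ω ≤ 1 := mul_le_one₀ ha1 (le_trans (pow_nonneg ha0 t) (h.pow_le ha0 ha1 ω t))
      (h.state_le_one t ω)
    calc a ^ (t + 1) = a * a ^ t := pow_succ' a t
      _ ≤ a * u t ω := mul_le_mul_of_nonneg_left (h.pow_le ha0 ha1 ω t) ha0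
      _ ≤ x (t + 1) ω + (1 - x (t + 1) ω) * (a * u t ω) := by nlinarith
      _ ≤ u (t + 1) ω := h.step t ω

lemma integrable_one_sub_arrival_mul (h : IsRefillProcess P u x a p) {f : Ω → ℝ}
    (hf : Integrable f P) (t : ℕ) : Integrable (fun ω => (1 - x t ω) * f ω) P := by
  refine hf.bdd_mul (c := 1) ((h.measurable_arrival t).const_sub 1).aestronglyMeasurable
    (ae_of_all _ fun ω => ?_)
  obtain ⟨h0, h1⟩ := h.arrival_mem t ω
  rw [Real.norm_eq_abs, abs_le]; constructor <;> linarith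

variable [IsProbabilityMeasure P]

lemma integrable_state (h : IsRefillProcess P u x a p) (ha0 : 0 ≤ a) (ha1 : a ≤ 1) (t : ℕ) :
    Integrable (u t) P := by
  refine Integrable.of_bound (h.measurable_state t).aestronglyMeasurable 1 (ae_of_all _ fun ω => ?_)
  rw [Real.norm_eq_abs, abs_le]
  exact ⟨by linarith [pow_nonneg ha0 t, h.pow_le ha0 ha1 ω t], h.state_le_one t ω⟩

lemma integrable_arrival (h : IsRefillProcess P u x a p) (t : ℕ) : Integrable (x t) P := by
  refine Integrable.of_bound (h.measurable_arrival t).aestronglyMeasurable 1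
    (ae_of_all _ fun ω => ?_)
  obtain ⟨h0, h1⟩ := h.arrival_mem t ω
  rw [Real.norm_eq_abs, abs_le]; constructor <;> linarith

lemma integrable_neg_log_state (h : IsRefillProcess P u x a p) (ha0 : 0 < a) (ha1 : a ≤ 1)
    (t : ℕ) : Integrable (fun ω => -log (u t ω)) P := by
  refine Integrable.of_bound ((h.measurable_state t).log.neg).aestronglyMeasurable (t * -log a)
    (ae_of_all _ fun ω => ?_)
  have hpow := h.pow_le ha0.le ha1 ω t
  have hlog := log_le_log (pow_pos ha0 t) hpow
  rw [log_pow] at hlog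
  have := log_nonpos ((pow_pos ha0 t).le.trans hpow) (h.state_le_one t ω)
  rw [Real.norm_eq_abs, abs_le]; constructor <;> nlinarith [log_nonpos ha0.le ha1]

lemma integral_one_sub_arrival_mul (h : IsRefillProcess P u x a p) {φ : ℝ → ℝ} (hφ : Measurable φ)
    (t : ℕ) : ∫ ω, (1 - x (t + 1) ω) * φ (u t ω) ∂P = (1 - p) * ∫ ω, φ (u t ω) ∂P := by
  have hind : IndepFun (fun ω => 1 - x (t + 1) ω) (fun ω => φ (u t ω)) P :=
    (h.indepFun t).symm.comp (measurable_const.sub measurable_id) hφ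
  rw [hind.integral_fun_mul_eq_mul_integral
    ((h.measurable_arrival _).const_sub 1).aestronglyMeasurable
    (hφ.comp (h.measurable_state t)).aestronglyMeasurable,
    integral_sub (integrable_const 1) (h.integrable_arrival _), h.integral_arrival]
  simp

lemma div_le_integral (h : IsRefillProcess P u x a p) (ha0 : 0 ≤ a) (ha1 : a ≤ 1) (hp0 : 0 < p)
    (hp1 : p ≤ 1) (t : ℕ) : p / (1 - (1 - p) * a) ≤ ∫ ω, u t ω ∂P := by
  have hden : 0 < 1 - (1 - p) * a := by nlinarith
  refine ge_of_mul_add_le (w := fun t => ∫ ω, u t ω ∂P) (a := (1 - p) * a) (b := p)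
    (by nlinarith) (le_of_eq ?_) ?_ (fun t => ?_) t
  · field_simp
    ring
  · simp only [h.state_zero, integral_const, probReal_univ, smul_eq_mul, one_mul]
    rw [div_le_one hden]
    nlinarith
  · have hprod :=
      h.integrable_one_sub_arrival_mul ((h.integrable_state ha0 ha1 t).const_mul a) (t + 1)
    calc (1 - p) * a * ∫ ω, u t ω ∂P + p
        = ∫ ω, x (t + 1) ω + (1 - x (t + 1) ω) * (a * u t ω) ∂P := by
          rw [integral_add (h.integrable_arrival _) hprod, h.integral_arrival,
            h.integral_one_sub_arrival_mul (measurable_const_mul a) t, integral_const_mul]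
          ring
      _ ≤ ∫ ω, u (t + 1) ω ∂P :=
          integral_mono ((h.integrable_arrival _).add hprod) (h.integrable_state ha0 ha1 _)
            (h.step t)

lemma integral_neg_log_le (h : IsRefillProcess P u x a p) (ha0 : 0 < a) (ha1 : a ≤ 1) (hp0 : 0 < p)
    (hp1 : p ≤ 1) (t : ℕ) : ∫ ω, -log (u t ω) ∂P ≤ (1 - p) * -log a / p := by
  have hc : 0 ≤ -log a := neg_nonneg.2 (log_nonpos ha0.le ha1)
  refine le_of_le_mul_add (w := fun t => ∫ ω, -log (u t ω) ∂P) (a := 1 - p) (b := (1 - p) * -log a)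
    (by linarith) (le_of_eq ?_) ?_ (fun t => ?_) t
  · field_simp
    ring
  · simp only [h.state_zero, log_one, neg_zero, integral_zero]
    positivity
  · have hprod := h.integrable_one_sub_arrival_mul
      ((h.integrable_neg_log_state ha0 ha1 t).add (integrable_const (-log a))) (t + 1)
    calc ∫ ω, -log (u (t + 1) ω) ∂P
        ≤ ∫ ω, (1 - x (t + 1) ω) * (-log (u t ω) + -log a) ∂P := by
          refine integral_mono (h.integrable_neg_log_state ha0 ha1 _) hprod fun ω => ?_
          obtain ⟨hx0, hx1⟩ := h.arrival_mem (t + 1) ω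
          have hu := (pow_pos ha0 t).trans_le (h.pow_le ha0.le ha1 ω t)
          have := neg_log_le_one_sub_mul_neg_log hx0 hx1 (mul_pos ha0 hu) (h.step t ω)
          rwa [log_mul ha0.ne' hu.ne', neg_add, add_comm (-log a)] at this
      _ = (1 - p) * ∫ ω, -log (u t ω) ∂P + (1 - p) * -log a := by
          rw [h.integral_one_sub_arrival_mul (φ := fun y => -log y + -log a)
            (measurable_log.neg.add_const _) t,
            integral_add (h.integrable_neg_log_state ha0 ha1 t) (integrable_const _)]
          simp only [integral_const, probReal_univ, smul_eq_mul, one_mul]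
          ring

lemma sub_le_integral_log (h : IsRefillProcess P u x a p) (ha0 : 0 < a) (ha1 : a ≤ 1)
    (hp0 : 0 < p) (hp1 : p ≤ 1) {c : ℝ} (hc : 0 ≤ c) (t : ℕ) :
    log (1 + c) - (1 - p) * -log a / p ≤ ∫ ω, log (1 + c * u t ω) ∂P := by
  have hu : ∀ ω, 0 < u t ω := fun ω => (pow_pos ha0 t).trans_le (h.pow_le ha0.le ha1 ω t)
  have hlog : Integrable (fun ω => log (u t ω)) P := by
    simpa using (h.integrable_neg_log_state ha0 ha1 t).neg
  calc log (1 + c) - (1 - p) * -log a / p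
      ≤ log (1 + c) - ∫ ω, -log (u t ω) ∂P := by
        linarith [h.integral_neg_log_le ha0 ha1 hp0 hp1 t]
    _ = ∫ ω, log (1 + c) + log (u t ω) ∂P := by
        rw [integral_add (integrable_const _) hlog, integral_neg]
        simp
    _ ≤ ∫ ω, log (1 + c * u t ω) ∂P :=
        integral_mono ((integrable_const _).add hlog)
          (integrable_log_one_add_mul_s13 (h.measurable_state t) hc (fun ω => (hu ω).le)
            (h.state_le_one t))
          fun ω => add_log_le_log_one_add_mul hc (hu ω) (h.state_le_one t ω)

lemma mul_div_le_integral_log (h : IsRefillProcess P u x a p) (ha0 : 0 ≤ a) (ha1 : a ≤ 1)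
    (hp0 : 0 < p) (hp1 : p ≤ 1) {c : ℝ} (hc : 0 ≤ c) (t : ℕ) :
    log (1 + c) * (p / (1 - (1 - p) * a)) ≤ ∫ ω, log (1 + c * u t ω) ∂P := by
  have hu : ∀ ω, 0 ≤ u t ω := fun ω => (pow_nonneg ha0 t).trans (h.pow_le ha0 ha1 ω t)
  calc log (1 + c) * (p / (1 - (1 - p) * a))
      ≤ log (1 + c) * ∫ ω, u t ω ∂P :=
        mul_le_mul_of_nonneg_left (h.div_le_integral ha0 ha1 hp0 hp1 t) (log_nonneg (by linarith))
    _ = ∫ ω, u t ω * log (1 + c) ∂P := by rw [integral_mul_const, mul_comm]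
    _ ≤ ∫ ω, log (1 + c * u t ω) ∂P := by
        refine integral_mono ((h.integrable_state ha0 ha1 t).mul_const _)
          (integrable_log_one_add_mul_s13 (h.measurable_state t) hc hu (h.state_le_one t)) fun ω => ?_
        have := mul_log_le_log_mul_add_one_sub (by linarith : 0 < 1 + c) (hu ω)
          (h.state_le_one t ω)
        rwa [show u t ω * (1 + c) + (1 - u t ω) = 1 + c * u t ω by ring] at this

end IsRefillProcess

lemma ProbabilityTheory.iIndepFun.indepFun_comp_fin {Ω : Type*} [MeasurableSpace Ω] {P : Measure Ω}
    {E : ℕ → Ω → ℝ} (hE : iIndepFun E P) (hEm : ∀ t, Measurable (E t)) {t : ℕ}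
    {h : (Fin t → ℝ) → ℝ} (hh : Measurable h) :
    IndepFun (fun ω => h fun i => E (i.1 + 1) ω) (E (t + 1)) P := by
  have hdisj : Disjoint (range (t + 1)) {t + 1} := by simp
  exact (hE.indepFun_finset _ _ hdisj hEm).comp
    (φ := fun v : range (t + 1) → ℝ => h fun i => v ⟨i.1 + 1, by simp⟩)
    (ψ := fun v : ({t + 1} : Finset ℕ) → ℝ => v ⟨t + 1, mem_singleton_self _⟩)
    (hh.comp (measurable_pi_lambda _ fun _ => measurable_pi_apply _))
    (measurable_pi_apply _)

/-- Battery level in slot `t` of the policy spending the fraction `q` of its battery in every slot,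
as a function of the arrivals `e i = E (i + 1)` seen so far; the value at `t = 0` is never used. -/
noncomputable def fixedFractionBattery (q B : ℝ) : (t : ℕ) → (Fin t → ℝ) → ℝ
  | 0, _ => B
  | 1, _ => B
  | t + 2, e =>
    min ((1 - q) * fixedFractionBattery q B (t + 1) (Fin.init e) + e (Fin.last (t + 1))) B

section FixedFractionBattery

variable {q B : ℝ}

lemma measurable_fixedFractionBattery : ∀ t, Measurable (fixedFractionBattery q B t)
  | 0 => measurable_const
  | 1 => measurable_const
  | t + 2 => by
    have hinit : Measurable (Fin.init : (Fin (t + 2) → ℝ) → Fin (t + 1) → ℝ) :=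
      measurable_pi_lambda _ fun _ => measurable_pi_apply _
    exact ((((measurable_fixedFractionBattery (t + 1)).comp hinit).const_mul _).add
      (measurable_pi_apply _)).min measurable_const

lemma fixedFractionBattery_succ {t : ℕ} (ht : 1 ≤ t) (e : Fin (t + 1) → ℝ) :
    fixedFractionBattery q B (t + 1) e =
      min (fixedFractionBattery q B t (Fin.init e) - q * fixedFractionBattery q B t (Fin.init e) +
        e (Fin.last t)) B := by
  obtain ⟨s, rfl⟩ := Nat.exists_eq_add_of_le' ht
  rw [fixedFractionBattery, sub_mul, one_mul]

lemma fixedFractionBattery_mem_Icc (hq1 : q ≤ 1) (hB : 0 ≤ B) :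
    ∀ t (e : Fin t → ℝ), (∀ i, 0 ≤ e i) → fixedFractionBattery q B t e ∈ Set.Icc 0 B
  | 0, _, _ => ⟨hB, le_rfl⟩
  | 1, _, _ => ⟨hB, le_rfl⟩
  | t + 2, e, he => by
    have ih := (fixedFractionBattery_mem_Icc hq1 hB (t + 1) (Fin.init e) fun i => he _).1
    exact ⟨le_min (add_nonneg (mul_nonneg (sub_nonneg.2 hq1) ih) (he _)) hB, min_le_right _ _⟩

lemma mul_fixedFractionBattery_mem_Icc (hq0 : 0 ≤ q) (hq1 : q ≤ 1) (hB : 0 ≤ B) (t : ℕ)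
    (e : Fin t → ℝ) (he : ∀ i, 0 ≤ e i) :
    q * fixedFractionBattery q B t e ∈ Set.Icc 0 (fixedFractionBattery q B t e) := by
  obtain ⟨hb0, -⟩ := fixedFractionBattery_mem_Icc hq1 hB t e he
  exact ⟨mul_nonneg hq0 hb0, mul_le_of_le_one_left hb0 hq1⟩

lemma fixedFractionBattery_add_two_div (hq1 : q ≤ 1) (hB : 0 < B) (t : ℕ) (e : Fin (t + 2) → ℝ)
    (he : ∀ i, 0 ≤ e i) :
    fixedFractionBattery q B (t + 2) e / B =
      min ((1 - q) * (fixedFractionBattery q B (t + 1) (Fin.init e) / B) +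
        min (e (Fin.last (t + 1))) B / B) 1 := by
  have hb := (fixedFractionBattery_mem_Icc hq1 hB.le (t + 1) (Fin.init e) fun i => he _).1
  rw [fixedFractionBattery, ← min_add_min_eq_min_add (mul_nonneg (sub_nonneg.2 hq1) hb),
    ← min_div_div_right hB.le, div_self hB.ne', add_div, mul_div_assoc]

end FixedFractionBattery

lemma isRefillProcess_fixedFractionBattery {Ω : Type*} [MeasurableSpace Ω] {P : Measure Ω}
    {E : ℕ → Ω → ℝ} {q B μ : ℝ} (hB : 0 < B) (hq0 : 0 ≤ q) (hq1 : q ≤ 1)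
    (hEm : ∀ t, Measurable (E t)) (hEnn : ∀ t ω, 0 ≤ E t ω) (hE : iIndepFun E P)
    (hmean : ∀ t, ∫ ω, min (E t ω) B ∂P = μ) :
    IsRefillProcess P (fun t ω => fixedFractionBattery q B t (fun i => E (i.1 + 1) ω) / B)
      (fun t ω => min (E t ω) B / B) (1 - q) (μ / B) where
  measurable_state t := (measurable_fixedFractionBattery t).comp
    (measurable_pi_lambda _ fun _ => hEm _) |>.div_const B
  measurable_arrival t := ((hEm t).min measurable_const).div_const B
  state_zero _ := div_self hB.ne'
  state_le_one t ω := (div_le_one hB).2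
    (fixedFractionBattery_mem_Icc hq1 hB.le t _ fun _ => hEnn _ ω).2
  arrival_mem t ω := min_div_mem_Icc hB (hEnn t ω)
  step t ω := by
    obtain ⟨hx0, hx1⟩ := min_div_mem_Icc hB (hEnn (t + 1) ω)
    obtain ⟨hb0, hbB⟩ := fixedFractionBattery_mem_Icc hq1 hB.le t (fun i => E (i.1 + 1) ω)
      fun _ => hEnn _ ω
    have hu1 : fixedFractionBattery q B t (fun i => E (i.1 + 1) ω) / B ≤ 1 := (div_le_one hB).2 hbB
    refine (add_one_sub_mul_le_min hx0 hx1 (by positivity) (by nlinarith)).trans ?_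
    cases t with
    | zero => exact (min_le_right _ _).trans (div_self hB.ne').ge
    | succ t =>
      rw [fixedFractionBattery_add_two_div hq1 hB t _ fun _ => hEnn _ ω]
      rfl
  indepFun t := (hE.indepFun_comp_fin hEm ((measurable_fixedFractionBattery t).div_const B)).comp
    measurable_id ((measurable_id.min measurable_const).div_const B)
  integral_arrival t := by rw [integral_div, hmean]

/-- The cap keeps `1 - q` away from `0`, so that `-log` of the normalized battery stays integrable
even when `μ = B`. -/
noncomputable def fraction (p : ℝ) : ℝ := min p (4 / 5)

section fraction

variable {p : ℝ}

lemma fraction_pos (hp : 0 < p) : 0 < fraction p := lt_min hp (by norm_num)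

lemma fraction_lt_one : fraction p < 1 := (min_le_right _ _).trans_lt (by norm_num)

lemma log_one_add_mul_sub_one_le (hp0 : 0 < p) (hp1 : p ≤ 1) {y : ℝ} (hy : 0 ≤ y) :
    log (1 + p * y) - 1 ≤ log (1 + fraction p * y) - (1 - p) * -log (1 - fraction p) / p := by
  rcases le_total p (4 / 5) with hp | hp
  · rw [fraction, min_eq_left hp]
    have h1p : 0 < 1 - p := by linarith
    have hlog : -log (1 - p) ≤ p / (1 - p) := by
      have h := log_le_sub_one_of_pos (inv_pos.2 h1p)
      have e : (1 - p)⁻¹ - 1 = p / (1 - p) := by field_simp; ring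
      rwa [log_inv, e] at h
    have : (1 - p) * -log (1 - p) / p ≤ 1 := by
      rw [div_le_one hp0]
      calc (1 - p) * -log (1 - p) ≤ (1 - p) * (p / (1 - p)) := mul_le_mul_of_nonneg_left hlog h1p.le
        _ = p := by field_simp
    linarith
  · rw [fraction, min_eq_right hp]
    have hlog5 : -log (1 - 4 / 5 : ℝ) ≤ 3 := by
      rw [show (1 - 4 / 5 : ℝ) = 5⁻¹ by norm_num, log_inv, neg_neg, log_le_iff_le_exp (by norm_num)]
      nlinarith [quadratic_le_exp_of_nonneg (show (0 : ℝ) ≤ 3 by norm_num)]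
    have hgap : (1 - p) * -log (1 - 4 / 5 : ℝ) / p ≤ 3 / 4 := by
      rw [div_le_iff₀ hp0]
      nlinarith [neg_nonneg.2 (log_nonpos (by norm_num) (by norm_num) : log (1 - 4 / 5 : ℝ) ≤ 0)]
    have hlog : log (1 + p * y) ≤ log (1 + 4 / 5 * y) + 1 / 4 := by
      have h := log_le_log (by positivity) (show 1 + p * y ≤ 5 / 4 * (1 + 4 / 5 * y) by nlinarith)
      rw [log_mul (by norm_num) (by positivity)] at h
      linarith [log_le_sub_one_of_pos (show (0 : ℝ) < 5 / 4 by norm_num)]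
    linarith

lemma half_log_one_add_mul_le (hp0 : 0 < p) (hp1 : p ≤ 1) {y : ℝ} (hy : 0 ≤ y) :
    log (1 + p * y) / 2 ≤ log (1 + fraction p * y) * (p / (1 - (1 - p) * (1 - fraction p))) := by
  have hq0 := fraction_pos hp0
  have hqp : fraction p ≤ p := min_le_left _ _
  have hden : 0 < 1 - (1 - p) * (1 - fraction p) := by nlinarith [fraction_lt_one (p := p)]
  have hconc := mul_log_le_log_mul_add_one_sub (show 0 < 1 + p * y by positivity)
    (div_nonneg hq0.le hp0.le) ((div_le_one hp0).2 hqp)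
  have e : fraction p / p * (1 + p * y) + (1 - fraction p / p) = 1 + fraction p * y := by
    field_simp; ring
  rw [e] at hconc
  have hhalf : 1 / 2 ≤ fraction p / (1 - (1 - p) * (1 - fraction p)) := by
    rw [le_div_iff₀ hden]
    rcases le_total p (4 / 5) with hp | hp
    · rw [fraction, min_eq_left hp]; nlinarith
    · rw [fraction, min_eq_right hp]; linarith
  have hΛ : 0 ≤ log (1 + p * y) := log_nonneg (by nlinarith)
  calc log (1 + p * y) / 2 ≤ log (1 + p * y) * (fraction p / (1 - (1 - p) * (1 - fraction p))) := by
        nlinarith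
    _ = fraction p / p * log (1 + p * y) * (p / (1 - (1 - p) * (1 - fraction p))) := by
        field_simp
    _ ≤ _ := mul_le_mul_of_nonneg_right hconc (by positivity)

end fraction

section Throughput

variable {Ω : Type*} [MeasurableSpace Ω] {P : Measure Ω} [IsProbabilityMeasure P]
  {E : ℕ → Ω → ℝ} {B γ μ : ℝ}

lemma integrable_min_const (hB : 0 ≤ B) (hEm : ∀ t, Measurable (E t))
    (hEnn : ∀ t ω, 0 ≤ E t ω) (t : ℕ) : Integrable (fun ω => min (E t ω) B) P := by
  refine Integrable.of_bound ((hEm t).min measurable_const).aestronglyMeasurable B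
    (ae_of_all _ fun ω => ?_)
  rw [Real.norm_eq_abs, abs_of_nonneg (le_min (hEnn t ω) hB)]
  exact min_le_right _ _

lemma sum_integral_le_of_admissible {g b : ℕ → Ω → ℝ} (hB : 0 ≤ B)
    (hEm : ∀ t, Measurable (E t)) (hEnn : ∀ t ω, 0 ≤ E t ω)
    (hmean : ∀ t, ∫ ω, min (E t ω) B ∂P = μ) (hb1 : ∀ ω, b 1 ω = B)
    (hrec : ∀ t, 1 ≤ t → ∀ ω, b (t + 1) ω = min (b t ω - g t ω + E (t + 1) ω) B)
    (hgb : ∀ t, 1 ≤ t → ∀ ω, 0 ≤ g t ω ∧ g t ω ≤ b t ω)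
    (hgi : ∀ t, 1 ≤ t → Integrable (g t) P) (n : ℕ) :
    ∑ t ∈ Icc 1 n, ∫ ω, g t ω ∂P ≤ B + n * μ := by
  have hgi' : ∀ t ∈ Icc 1 n, Integrable (g t) P := fun t ht => hgi t (mem_Icc.1 ht).1
  have hEi : ∀ t ∈ Icc 2 (n + 1), Integrable (fun ω => min (E t ω) B) P :=
    fun t _ => integrable_min_const hB hEm hEnn t
  have hpath : ∀ ω, ∑ t ∈ Icc 1 n, g t ω ≤ B + ∑ t ∈ Icc 2 (n + 1), min (E t ω) B := fun ω => by
    have := sum_add_le_add_sum_min (g := fun t => g t ω) (b := fun t => b t ω)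
      (e := fun t => E t ω) (hb1 ω) (fun t ht => hrec t ht ω) (fun t ht => (hgb t ht ω).2) n
    have := (hgb (n + 1) (by omega) ω).1.trans (hgb (n + 1) (by omega) ω).2
    linarith
  calc ∑ t ∈ Icc 1 n, ∫ ω, g t ω ∂P = ∫ ω, ∑ t ∈ Icc 1 n, g t ω ∂P :=
        (integral_finsetSum _ hgi').symm
    _ ≤ ∫ ω, B + ∑ t ∈ Icc 2 (n + 1), min (E t ω) B ∂P :=
        integral_mono (integrable_finsetSum _ hgi')
          ((integrable_const B).add (integrable_finsetSum _ hEi)) hpath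
    _ = B + n * μ := by
        rw [integral_add (integrable_const B) (integrable_finsetSum _ hEi),
          integral_finsetSum _ hEi, sum_congr rfl fun t _ => hmean t]
        simp

lemma liminf_throughput_le {g b : ℕ → Ω → ℝ} (hB : 0 ≤ B) (hγ : 0 ≤ γ) (hμ : 0 ≤ μ)
    (hEm : ∀ t, Measurable (E t)) (hEnn : ∀ t ω, 0 ≤ E t ω)
    (hmean : ∀ t, ∫ ω, min (E t ω) B ∂P = μ) (hb1 : ∀ ω, b 1 ω = B)
    (hrec : ∀ t, 1 ≤ t → ∀ ω, b (t + 1) ω = min (b t ω - g t ω + E (t + 1) ω) B)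
    (hgb : ∀ t, 1 ≤ t → ∀ ω, 0 ≤ g t ω ∧ g t ω ≤ b t ω)
    (hgm : ∀ t, 1 ≤ t → Measurable (g t)) :
    liminf (fun n : ℕ => (1 / (n : ℝ)) * ∑ t ∈ Icc 1 n,
      ∫ ω, (1 / 2) * logb 2 (1 + γ * g t ω) ∂P) atTop ≤ (1 / 2) * logb 2 (1 + γ * μ) := by
  have hγμ : 0 < 1 + γ * μ := by positivity
  have hbB : ∀ t, 1 ≤ t → ∀ ω, b t ω ≤ B := by
    intro t ht
    induction t, ht using Nat.le_induction with
    | base => exact fun ω => (hb1 ω).le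
    | succ t ht _ => exact fun ω => (hrec t ht ω).trans_le (min_le_right _ _)
  have hgi : ∀ t, 1 ≤ t → Integrable (g t) P := fun t ht =>
    Integrable.of_bound (hgm t ht).aestronglyMeasurable B (ae_of_all _ fun ω => by
      rw [Real.norm_eq_abs, abs_of_nonneg (hgb t ht ω).1]
      exact (hgb t ht ω).2.trans (hbB t ht ω))
  set κ := γ / (1 + γ * μ)
  have hslot : ∀ t, 1 ≤ t →
      ∫ ω, log (1 + γ * g t ω) ∂P ≤ log (1 + γ * μ) + κ * (∫ ω, g t ω ∂P - μ) := by
    intro t ht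
    have hi : Integrable (fun ω => κ * (g t ω - μ)) P :=
      ((hgi t ht).sub (integrable_const μ)).const_mul κ
    calc ∫ ω, log (1 + γ * g t ω) ∂P ≤ ∫ ω, log (1 + γ * μ) + κ * (g t ω - μ) ∂P :=
          integral_mono (integrable_log_one_add_mul_s13 (hgm t ht) hγ (fun ω => (hgb t ht ω).1)
            fun ω => (hgb t ht ω).2.trans (hbB t ht ω))
            ((integrable_const _).add hi)
            fun ω => log_one_add_mul_le_tangent (by nlinarith [mul_nonneg hγ (hgb t ht ω).1]) hγμ
      _ = _ := by
          rw [integral_add (integrable_const _) hi,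
            integral_const_mul, integral_sub (hgi t ht) (integrable_const μ)]
          simp
  refine liminf_average_le (K := κ * B / (2 * log 2))
    (fun t ht => integral_nonneg fun ω => mul_nonneg (by norm_num)
      (logb_nonneg one_lt_two (by nlinarith [mul_nonneg hγ (hgb t ht ω).1]))) fun n => ?_
  have hκ : 0 ≤ κ := by positivity
  have hsum := sum_integral_le_of_admissible hB hEm hEnn hmean hb1 hrec hgb hgi n
  have hlog : ∑ t ∈ Icc 1 n, ∫ ω, log (1 + γ * g t ω) ∂P ≤ n * log (1 + γ * μ) + κ * B := by
    calc ∑ t ∈ Icc 1 n, ∫ ω, log (1 + γ * g t ω) ∂P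
        ≤ ∑ t ∈ Icc 1 n, (log (1 + γ * μ) + κ * (∫ ω, g t ω ∂P - μ)) :=
          sum_le_sum fun t ht => hslot t (mem_Icc.1 ht).1
      _ = n * log (1 + γ * μ) + κ * (∑ t ∈ Icc 1 n, ∫ ω, g t ω ∂P - n * μ) := by
          rw [sum_add_distrib, ← mul_sum, sum_sub_distrib]
          simp
      _ ≤ n * log (1 + γ * μ) + κ * B := by nlinarith
  have hlog2 : 0 < log 2 := log_pos one_lt_two
  rw [sum_congr rfl fun t _ => integral_half_logb_two P fun ω => 1 + γ * g t ω, ← sum_div,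
    div_le_iff₀ (by positivity), logb]
  refine hlog.trans_eq ?_
  field_simp

lemma max_le_integral_log_fixedFraction (hB : 0 < B) (hγ : 0 ≤ γ) (hμ : 0 < μ)
    (hEm : ∀ t, Measurable (E t)) (hEnn : ∀ t ω, 0 ≤ E t ω) (hE : iIndepFun E P)
    (hmean : ∀ t, ∫ ω, min (E t ω) B ∂P = μ) (t : ℕ) :
    max (log (1 + γ * μ) - 1) (log (1 + γ * μ) / 2) ≤
      ∫ ω, log (1 + γ * (fraction (μ / B) *
        fixedFractionBattery (fraction (μ / B)) B t fun i => E (i.1 + 1) ω)) ∂P := by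
  set p := μ / B
  set q := fraction p
  have hμB : μ ≤ B := by
    rw [← hmean 0]
    exact (integral_mono (integrable_min_const hB.le hEm hEnn 0) (integrable_const B)
      fun ω => min_le_right _ _).trans_eq (by simp)
  have hp0 : 0 < p := div_pos hμ hB
  have hp1 : p ≤ 1 := (div_le_one hB).2 hμB
  have hq0 : 0 < q := fraction_pos hp0
  have hq1 : q < 1 := fraction_lt_one
  have hR := isRefillProcess_fixedFractionBattery (P := P) hB hq0.le hq1.le hEm hEnn hE hmean
  have hc : 0 ≤ γ * B := by positivity
  have hΛ : log (1 + γ * μ) = log (1 + p * (γ * B)) := by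
    rw [show p * (γ * B) = γ * μ by simp only [p]; field_simp]
  have heq : ∫ ω, log (1 + γ * (q * fixedFractionBattery q B t fun i => E (i.1 + 1) ω)) ∂P =
      ∫ ω, log (1 + q * (γ * B) *
        (fixedFractionBattery q B t (fun i => E (i.1 + 1) ω) / B)) ∂P := by
    congr 1 with ω
    field_simp
  rw [heq, hΛ]
  refine max_le ?_ ?_
  · exact (log_one_add_mul_sub_one_le hp0 hp1 hc).trans
      (hR.sub_le_integral_log (by linarith) (by linarith) hp0 hp1 (by positivity) t)
  · exact (half_log_one_add_mul_le hp0 hp1 hc).trans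
      (hR.mul_div_le_integral_log (by linarith) (by linarith) hp0 hp1 (by positivity) t)

lemma le_liminf_throughput_fixedFraction (hB : 0 < B) (hγ : 0 ≤ γ) (hμ : 0 < μ)
    (hEm : ∀ t, Measurable (E t)) (hEnn : ∀ t ω, 0 ≤ E t ω) (hE : iIndepFun E P)
    (hmean : ∀ t, ∫ ω, min (E t ω) B ∂P = μ) :
    max ((1 / 2) * logb 2 (1 + γ * μ) - 1 / (2 * log 2)) ((1 / 2) * ((1 / 2) * logb 2 (1 + γ * μ)))
      ≤ liminf (fun n : ℕ => (1 / (n : ℝ)) * ∑ t ∈ Icc 1 n, ∫ ω, (1 / 2) * logb 2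
        (1 + γ * (fraction (μ / B) * fixedFractionBattery (fraction (μ / B)) B t
          fun i => E (i.1 + 1) ω)) ∂P) atTop := by
  have hlog2 : 0 < 2 * log 2 := by positivity
  have hq0 : 0 ≤ fraction (μ / B) := (fraction_pos (div_pos hμ hB)).le
  have hq1 : fraction (μ / B) ≤ 1 := fraction_lt_one.le
  refine le_liminf_average (M := (1 / 2) * logb 2 (1 + γ * B)) (fun t _ => ?_) (fun t _ => ?_)
  · have hmax : max ((1 / 2) * logb 2 (1 + γ * μ) - 1 / (2 * log 2))
        ((1 / 2) * ((1 / 2) * logb 2 (1 + γ * μ))) =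
        max (log (1 + γ * μ) - 1) (log (1 + γ * μ) / 2) / (2 * log 2) := by
      rw [← max_div_div_right hlog2.le, logb]
      congr 1 <;> field_simp
    rw [hmax, integral_half_logb_two]
    exact div_le_div_of_nonneg_right
      (max_le_integral_log_fixedFraction hB hγ hμ hEm hEnn hE hmean t) hlog2.le
  · have hqb := fun ω => mul_fixedFractionBattery_mem_Icc hq0 hq1 hB.le t
      (fun i => E (i.1 + 1) ω) fun _ => hEnn _ ω
    exact integral_half_logb_one_add_mul_le hγ (fun ω => (hqb ω).1) fun ω =>
      (hqb ω).2.trans (fixedFractionBattery_mem_Icc hq1 hB.le t _ fun _ => hEnn _ ω).2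

end Throughput

/-- **Approximation of the optimal throughput.** For i.i.d. nonnegative arrivals `E`,
battery capacity `B > 0`, SNR `γ > 0`, and `μ = 𝔼[min (E 1) B] > 0`, the optimal
long-term average throughput `Θ` (the supremum over admissible online policies of the
liminf of `n`-horizon expected throughputs) satisfies
`½ log₂(1 + γ μ) - 1/(2 ln 2) ≤ Θ ≤ ½ log₂(1 + γ μ)` and
`Θ ≥ (1/2) ½ log₂(1 + γ μ)`. -/
theorem stmt_13 {Ω : Type*} [MeasurableSpace Ω] (P : Measure Ω) [IsProbabilityMeasure P]
    (B γ : ℝ) (hB : 0 < B) (hγ : 0 < γ)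
    (E : ℕ → Ω → ℝ) (hEmeas : ∀ t, Measurable (E t))
    (hEnn : ∀ t ω, 0 ≤ E t ω)
    (hindep : iIndepFun E P)
    (hident : ∀ t, IdentDistrib (E t) (E 1) P P)
    (μ : ℝ) (hμ : μ = ∫ ω, min (E 1 ω) B ∂P) (hμpos : 0 < μ)
    (Θ : ℝ)
    (hΘ : Θ = sSup {r : ℝ | ∃ g b : ℕ → Ω → ℝ,
        (∀ ω, b 1 ω = B) ∧
        (∀ t, 1 ≤ t → ∀ ω, b (t + 1) ω = min (b t ω - g t ω + E (t + 1) ω) B) ∧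
        (∀ t, 1 ≤ t → ∀ ω, 0 ≤ g t ω ∧ g t ω ≤ b t ω) ∧
        (∀ t, 1 ≤ t → ∃ h : (Fin t → ℝ) → ℝ, Measurable h ∧
          ∀ ω, g t ω = h (fun i => E (i.1 + 1) ω)) ∧
        r = liminf (fun n : ℕ => (1 / (n : ℝ)) * ∑ t ∈ Finset.Icc 1 n,
              ∫ ω, (1 / 2) * Real.logb 2 (1 + γ * g t ω) ∂P) atTop}) :
    ((1 / 2) * Real.logb 2 (1 + γ * μ) - 1 / (2 * Real.log 2) ≤ Θ ∧
      Θ ≤ (1 / 2) * Real.logb 2 (1 + γ * μ)) ∧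
    (1 / 2) * ((1 / 2) * Real.logb 2 (1 + γ * μ)) ≤ Θ := by
  subst hΘ
  have hmean : ∀ t, ∫ ω, min (E t ω) B ∂P = μ := fun t =>
    hμ ▸ ((hident t).comp (measurable_id.min measurable_const)).integral_eq
  obtain ⟨hlow₁, hlow₂⟩ := max_le_iff.1
    (le_liminf_throughput_fixedFraction hB hγ.le hμpos hEmeas hEnn hindep hmean)
  refine ⟨⟨hlow₁.trans (le_csSup ⟨_, ?ub⟩ ?mem), csSup_le ⟨_, ?mem⟩ ?ub⟩,
    hlow₂.trans (le_csSup ⟨_, ?ub⟩ ?mem)⟩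
  case mem =>
    refine ⟨_, fun t ω => fixedFractionBattery (fraction (μ / B)) B t fun i => E (i.1 + 1) ω,
      fun _ => rfl, fun t ht ω => fixedFractionBattery_succ ht _,
      fun t _ ω => mul_fixedFractionBattery_mem_Icc (fraction_pos (div_pos hμpos hB)).le
        fraction_lt_one.le hB.le t _ fun _ => hEnn _ ω,
      fun t _ => ⟨_, (measurable_fixedFractionBattery t).const_mul _, fun _ => rfl⟩, rfl⟩
  case ub =>
    rintro r ⟨g, b, hb1, hrec, hgb, hon, rfl⟩
    refine liminf_throughput_le hB.le hγ.le hμpos.le hEmeas hEnn hmean hb1 hrec hgb fun t ht => ?_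
    obtain ⟨h, hh, hg⟩ := hon t ht
    rw [funext hg]
    exact hh.comp (measurable_pi_lambda _ fun _ => hEmeas _)
end
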